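/- arXiv:2602.06045 — 11 statements merged into one kernel-verified Lean document; each statement's English description precedes it below -/
import Mathlib

section
/- Let A be a generalized circular quasi-Florentine rectangle of size s × n over Z_{N1} and let B be a generalized quasi-Florentine rectangle of size t × m over Z_{N2}. Then the min{s,t} × nm matrix D of Construction 1, with entries d_{i,j} = a_{i, j mod n} + N1 · b_{i, ⌊j/n⌋} in Z_{N1 N2}, is a generalized quasi-Florentine rectangle of size min{s,t} × nm over Z_{N1 N2}. -/
/-- Generalized quasi-Florentine rectangle of size `s × n` over `ZMod N`:
each row has pairwise distinct entries (C1), and for every ordered pair of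
distinct symbols and every step `m` with `1 ≤ m < n`, at most one row contains
the pair at distance `m` (C2). -/
def IsGQFR (N s n : ℕ) (A : ℕ → ℕ → ZMod N) : Prop :=
  (∀ i < s, ∀ j < n, ∀ k < n, A i j = A i k → j = k) ∧
  (∀ a b : ZMod N, a ≠ b → ∀ m : ℕ, 1 ≤ m → m < n →
    ∀ i < s, ∀ p < s,
      (∃ j, j + m < n ∧ A i j = a ∧ A i (j + m) = b) →
      (∃ j, j + m < n ∧ A p j = a ∧ A p (j + m) = b) → i = p)

/-- Generalized circular quasi-Florentine rectangle: C1 together with the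
circular version of C2 (steps counted cyclically modulo the row length `n`). -/
def IsGCQFR (N s n : ℕ) (A : ℕ → ℕ → ZMod N) : Prop :=
  (∀ i < s, ∀ j < n, ∀ k < n, A i j = A i k → j = k) ∧
  (∀ a b : ZMod N, a ≠ b → ∀ m : ℕ, 1 ≤ m → m < n →
    ∀ i < s, ∀ p < s,
      (∃ j < n, A i j = a ∧ A i ((j + m) % n) = b) →
      (∃ j < n, A p j = a ∧ A p ((j + m) % n) = b) → i = p)

/-- Construction 1: from an `s × n` matrix `A` over `ZMod N1` and a `t × m`
matrix `B` over `ZMod N2`, form the matrix with entries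
`d_{i,j} = a_{i, j mod n} + N1 * b_{i, ⌊j/n⌋}` in `ZMod (N1 * N2)`. -/
def construct1 (N1 N2 n : ℕ) (A : ℕ → ℕ → ZMod N1) (B : ℕ → ℕ → ZMod N2) :
    ℕ → ℕ → ZMod (N1 * N2) :=
  fun i j => (((A i (j % n)).val + N1 * (B i (j / n)).val : ℕ) : ZMod (N1 * N2))

lemma decode {N1 N2 : ℕ} (h1 : 0 < N1) (h2 : 0 < N2)
    {x1 y1 : ZMod N1} {x2 y2 : ZMod N2}
    (h : ((x1.val + N1 * x2.val : ℕ) : ZMod (N1 * N2)) =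
         ((y1.val + N1 * y2.val : ℕ) : ZMod (N1 * N2))) :
    x1 = y1 ∧ x2 = y2 := by
  haveI : NeZero N1 := ⟨h1.ne'⟩
  haveI : NeZero N2 := ⟨h2.ne'⟩
  have key : ∀ (u : ZMod N1) (v : ZMod N2), u.val + N1 * v.val < N1 * N2 := by
    intro u v
    have hu := ZMod.val_lt u
    have hv : v.val + 1 ≤ N2 := ZMod.val_lt v
    calc u.val + N1 * v.val < N1 * (v.val + 1) := by
          rw [Nat.mul_add, Nat.mul_one]; omega
      _ ≤ N1 * N2 := Nat.mul_le_mul_left _ hv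
  have hval := congrArg ZMod.val h
  rw [ZMod.val_cast_of_lt (key x1 x2), ZMod.val_cast_of_lt (key y1 y2)] at hval
  have hx1 := ZMod.val_lt x1
  have hy1 := ZMod.val_lt y1
  have e1 : x1.val = y1.val := by
    have := congrArg (· % N1) hval
    simpa [Nat.add_mul_mod_self_left, Nat.mod_eq_of_lt hx1, Nat.mod_eq_of_lt hy1] using this
  have e2 : x2.val = y2.val := Nat.eq_of_mul_eq_mul_left h1 (by omega)
  exact ⟨ZMod.val_injective _ e1, ZMod.val_injective _ e2⟩

/-- Theorem 2: if `A` is a generalized circular quasi-Florentine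
rectangle of size `s × n` over `ZMod N1` and `B` is a generalized
quasi-Florentine rectangle of size `t × m` over `ZMod N2`, then the matrix `D`
of Construction 1 is a generalized quasi-Florentine rectangle of size
`min{s,t} × nm` over `ZMod (N1 * N2)`. -/
theorem stmt2 (N1 N2 s t n m : ℕ) (hN1 : 2 ≤ N1) (hN2 : 2 ≤ N2)
    (hn : 2 ≤ n) (hnN : n ≤ N1) (hm : 2 ≤ m) (hmN : m ≤ N2)
    (A : ℕ → ℕ → ZMod N1) (hA : IsGCQFR N1 s n A)
    (B : ℕ → ℕ → ZMod N2) (hB : IsGQFR N2 t m B) :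
    IsGQFR (N1 * N2) (min s t) (n * m) (construct1 N1 N2 n A B) := by
  have h1 : 0 < N1 := by omega
  have h2 : 0 < N2 := by omega
  have hn0 : 0 < n := by omega
  obtain ⟨hA1, hA2⟩ := hA
  obtain ⟨hB1, hB2⟩ := hB
  constructor
  · -- C1
    intro i hi j hj k hk hjk
    have his : i < s := lt_of_lt_of_le hi (Nat.min_le_left s t)
    have hit : i < t := lt_of_lt_of_le hi (Nat.min_le_right s t)
    simp only [construct1] at hjk
    obtain ⟨e1, e2⟩ := decode h1 h2 hjk
    have hmod := hA1 i his (j % n) (Nat.mod_lt _ hn0) (k % n) (Nat.mod_lt _ hn0) e1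
    have hdiv := hB1 i hit (j / n) (Nat.div_lt_of_lt_mul hj) (k / n) (Nat.div_lt_of_lt_mul hk) e2
    calc j = n * (j / n) + j % n := (Nat.div_add_mod j n).symm
      _ = n * (k / n) + k % n := by rw [hdiv, hmod]
      _ = k := Nat.div_add_mod k n
  · -- C2
    rintro a b hab M hM1 hMn i hi p hp ⟨j, hjM, haj, hbj⟩ ⟨k, hkM, hak, hbk⟩
    have his : i < s := lt_of_lt_of_le hi (Nat.min_le_left s t)
    have hit : i < t := lt_of_lt_of_le hi (Nat.min_le_right s t)
    have hps : p < s := lt_of_lt_of_le hp (Nat.min_le_left s t)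
    have hpt : p < t := lt_of_lt_of_le hp (Nat.min_le_right s t)
    simp only [construct1] at haj hbj hak hbk
    have hMeq : n * (M / n) + M % n = M := Nat.div_add_mod M n
    have hrn : M % n < n := Nat.mod_lt _ hn0
    have hqm : M / n < m := Nat.div_lt_of_lt_mul hMn
    -- arithmetic of (x + M) mod/div n
    have hmodeq : ∀ x : ℕ, (x + M) % n = (x % n + M % n) % n := fun x => Nat.add_mod x M n
    have hdiveq : ∀ x : ℕ, (x + M) / n = x / n + M / n + (x % n + M % n) / n := by
      intro x
      have h3 : n * (x / n) + x % n = x := Nat.div_add_mod x n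
      have h4 : x + M = n * (x / n + M / n) + (x % n + M % n) := by
        calc x + M = (n * (x / n) + x % n) + (n * (M / n) + M % n) := by rw [h3, hMeq]
          _ = n * (x / n + M / n) + (x % n + M % n) := by ring
      rw [h4, Nat.mul_add_div hn0]
    by_cases hr0 : M % n = 0
    · -- pure vertical step: use condition C2 of B with step M / n
      have hq1 : 1 ≤ M / n := by
        rcases Nat.eq_zero_or_pos (M / n) with h | h
        · rw [h] at hMeq; omega
        · exact h
      have hmod0 : ∀ x : ℕ, (x + M) % n = x % n := by
        intro x; rw [hmodeq, hr0, Nat.add_zero, Nat.mod_mod_of_dvd _ dvd_rfl]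
      have hdiv0 : ∀ x : ℕ, (x + M) / n = x / n + M / n := by
        intro x
        rw [hdiveq, hr0, Nat.add_zero, Nat.div_eq_of_lt (Nat.mod_lt _ hn0), Nat.add_zero]
      rw [hmod0, hdiv0] at hbj hbk
      have hne : B i (j / n) ≠ B i (j / n + M / n) := by
        intro e
        apply hab
        rw [← haj, ← hbj, e]
      obtain ⟨ea1, ea2⟩ := decode h1 h2 (haj.trans hak.symm)
      obtain ⟨eb1, eb2⟩ := decode h1 h2 (hbj.trans hbk.symm)
      have hjb : j / n + M / n < m := by
        have := Nat.div_lt_of_lt_mul hjM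
        rw [hdiv0] at this; exact this
      have hkb : k / n + M / n < m := by
        have := Nat.div_lt_of_lt_mul hkM
        rw [hdiv0] at this; exact this
      exact hB2 _ _ hne (M / n) hq1 hqm i hit p hpt
        ⟨j / n, hjb, rfl, rfl⟩ ⟨k / n, hkb, ea2.symm, eb2.symm⟩
    · -- horizontal component moves: use circular condition of A with step M % n
      have hr1 : 1 ≤ M % n := by omega
      rw [hmodeq j] at hbj
      rw [hmodeq k] at hbk
      have hne : A i (j % n) ≠ A i ((j % n + M % n) % n) := by
        intro e
        have hidx := hA1 i his (j % n) (Nat.mod_lt _ hn0)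
          ((j % n + M % n) % n) (Nat.mod_lt _ hn0) e
        have hj1 : j % n < n := Nat.mod_lt _ hn0
        rcases Nat.lt_or_ge (j % n + M % n) n with h | h
        · rw [Nat.mod_eq_of_lt h] at hidx; omega
        · rw [Nat.mod_eq_sub_mod h,
              Nat.mod_eq_of_lt (show j % n + M % n - n < n by omega)] at hidx
          omega
      obtain ⟨ea1, ea2⟩ := decode h1 h2 (haj.trans hak.symm)
      obtain ⟨eb1, eb2⟩ := decode h1 h2 (hbj.trans hbk.symm)
      exact hA2 _ _ hne (M % n) hr1 hrn i his p hps
        ⟨j % n, Nat.mod_lt _ hn0, rfl, rfl⟩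
        ⟨k % n, Nat.mod_lt _ hn0, ea1.symm, eb1.symm⟩
end

section
/- Let N1 be a positive integer with smallest prime factor p1, let A be a circular Florentine rectangle of size (p1 − 1) × N1 over Z_{N1}, let p be a prime, n a positive integer, and 1 ≤ c < p^n − 1, and let B be a generalized quasi-Florentine rectangle of size p^n × (p^n − c) over Z_{p^n}. Then the matrix D of Construction 1 (applied to A over Z_{N1} and B over Z_{p^n}) is a generalized quasi-Florentine rectangle of size min{p1 − 1, p^n} × N1(p^n − c) over Z_{N1 p^n}. -/
/-- Circular Florentine rectangle of size `s × N` over `ZMod N`: every row is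
a permutation of `ZMod N` and the circular condition C2 holds. -/
def IsCircFlorentine (N s : ℕ) (A : ℕ → ℕ → ZMod N) : Prop :=
  (∀ i < s, ∀ x : ZMod N, ∃ j < N, A i j = x) ∧ IsGCQFR N s N A

/-- Injectivity of the encoding `(x, y) ↦ x.val + N1 * y.val` into `ZMod (N1 * N2)`. -/
lemma enc_inj {N1 N2 : ℕ} (h1 : 0 < N1) (h2 : 0 < N2)
    (x x' : ZMod N1) (y y' : ZMod N2)
    (h : ((x.val + N1 * y.val : ℕ) : ZMod (N1 * N2)) =
         ((x'.val + N1 * y'.val : ℕ) : ZMod (N1 * N2))) : x = x' ∧ y = y' := by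
  haveI : NeZero N1 := ⟨h1.ne'⟩
  haveI : NeZero N2 := ⟨h2.ne'⟩
  haveI : NeZero (N1 * N2) := ⟨Nat.mul_ne_zero h1.ne' h2.ne'⟩
  have hx := ZMod.val_lt x
  have hx' := ZMod.val_lt x'
  have hy := ZMod.val_lt y
  have hy' := ZMod.val_lt y'
  have key : ∀ (u : ZMod N1) (v : ZMod N2), u.val + N1 * v.val < N1 * N2 := by
    intro u v
    calc u.val + N1 * v.val < N1 + N1 * v.val := by
          have := ZMod.val_lt u; omega
      _ = N1 * (v.val + 1) := by ring
      _ ≤ N1 * N2 := Nat.mul_le_mul_left _ (by have := ZMod.val_lt v; omega)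
  have e : x.val + N1 * y.val = x'.val + N1 * y'.val := by
    have := congrArg ZMod.val h
    rwa [ZMod.val_cast_of_lt (key x y), ZMod.val_cast_of_lt (key x' y')] at this
  have ex : x.val = x'.val := by
    have m1 : (x.val + N1 * y.val) % N1 = x.val := by
      rw [Nat.add_mul_mod_self_left, Nat.mod_eq_of_lt hx]
    have m2 : (x'.val + N1 * y'.val) % N1 = x'.val := by
      rw [Nat.add_mul_mod_self_left, Nat.mod_eq_of_lt hx']
    rw [← m1, ← m2, e]
  have ey : y.val = y'.val := by
    have : N1 * y.val = N1 * y'.val := by omega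
    exact Nat.eq_of_mul_eq_mul_left h1 this
  exact ⟨ZMod.val_injective N1 ex, ZMod.val_injective N2 ey⟩

/-- Corollary, part i: Construction 1 applied to a circular
Florentine rectangle of size `(p1 - 1) × N1` over `ZMod N1` (`p1` the smallest
prime factor of `N1`) and a generalized quasi-Florentine rectangle of size
`p^n × (p^n - c)` over `ZMod (p^n)` yields a generalized quasi-Florentine
rectangle of size `min{p1 - 1, p^n} × N1 (p^n - c)` over `ZMod (N1 * p^n)`. -/
theorem stmt3 (N1 p n c p1 : ℕ) (hN1 : 0 < N1) (hp1 : p1 = N1.minFac)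
    (hp : p.Prime) (hn : 0 < n) (hc1 : 1 ≤ c) (hc2 : c < p ^ n - 1)
    (A : ℕ → ℕ → ZMod N1) (hA : IsCircFlorentine N1 (p1 - 1) A)
    (B : ℕ → ℕ → ZMod (p ^ n)) (hB : IsGQFR (p ^ n) (p ^ n) (p ^ n - c) B) :
    IsGQFR (N1 * p ^ n) (min (p1 - 1) (p ^ n)) (N1 * (p ^ n - c))
      (construct1 N1 (p ^ n) N1 A B) := by
  have h2 : 0 < p ^ n := pow_pos hp.pos n
  constructor
  · -- C1
    intro i hi j hj k hk heq
    have hiA : i < p1 - 1 := lt_of_lt_of_le hi (min_le_left _ _)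
    have hiB : i < p ^ n := lt_of_lt_of_le hi (min_le_right _ _)
    obtain ⟨e1, e2⟩ := enc_inj hN1 h2 _ _ _ _ heq
    have hmod : j % N1 = k % N1 :=
      hA.2.1 i hiA _ (Nat.mod_lt _ hN1) _ (Nat.mod_lt _ hN1) e1
    have hjd : j / N1 < p ^ n - c :=
      (Nat.div_lt_iff_lt_mul hN1).2 (by rw [Nat.mul_comm (p ^ n - c) N1]; exact hj)
    have hkd : k / N1 < p ^ n - c :=
      (Nat.div_lt_iff_lt_mul hN1).2 (by rw [Nat.mul_comm (p ^ n - c) N1]; exact hk)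
    have hdiv : j / N1 = k / N1 := hB.1 i hiB _ hjd _ hkd e2
    have d1 := Nat.div_add_mod j N1
    have d2 := Nat.div_add_mod k N1
    rw [hmod, hdiv] at d1
    omega
  · -- C2
    rintro a b hab m hm1 hm2 i hi q hq ⟨j, hj, hja, hjb⟩ ⟨j', hj', hja', hjb'⟩
    have hiA : i < p1 - 1 := lt_of_lt_of_le hi (min_le_left _ _)
    have hiB : i < p ^ n := lt_of_lt_of_le hi (min_le_right _ _)
    have hqA : q < p1 - 1 := lt_of_lt_of_le hq (min_le_left _ _)
    have hqB : q < p ^ n := lt_of_lt_of_le hq (min_le_right _ _)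
    obtain ⟨ea1, eb1⟩ := enc_inj hN1 h2 _ _ _ _ (hja.trans hja'.symm)
    obtain ⟨ea2, eb2⟩ := enc_inj hN1 h2 _ _ _ _ (hjb.trans hjb'.symm)
    by_cases hr0 : m % N1 = 0
    · -- N1 divides m; use B's condition
      obtain ⟨m', rfl⟩ := Nat.dvd_of_mod_eq_zero hr0
      have hm'1 : 1 ≤ m' := by
        rcases Nat.eq_zero_or_pos m' with h | h
        · simp [h] at hm1
        · exact h
      have hm'2 : m' < p ^ n - c := Nat.lt_of_mul_lt_mul_left hm2
      have hmodeq : (j + N1 * m') % N1 = j % N1 := Nat.add_mul_mod_self_left j N1 m'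
      have hmodeq' : (j' + N1 * m') % N1 = j' % N1 := Nat.add_mul_mod_self_left j' N1 m'
      have hdiveq : (j + N1 * m') / N1 = j / N1 + m' := Nat.add_mul_div_left j m' hN1
      have hdiveq' : (j' + N1 * m') / N1 = j' / N1 + m' := Nat.add_mul_div_left j' m' hN1
      have hBne : B i (j / N1) ≠ B i ((j + N1 * m') / N1) := by
        intro hEq
        apply hab
        rw [← hja, ← hjb]
        unfold construct1
        rw [hmodeq, hEq]
      have hjd : j / N1 + m' < p ^ n - c := by
        have h3 : (j + N1 * m') / N1 < p ^ n - c :=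
          (Nat.div_lt_iff_lt_mul hN1).2 (by rw [Nat.mul_comm (p ^ n - c) N1]; exact hj)
        rwa [hdiveq] at h3
      have hj'd : j' / N1 + m' < p ^ n - c := by
        have h3 : (j' + N1 * m') / N1 < p ^ n - c :=
          (Nat.div_lt_iff_lt_mul hN1).2 (by rw [Nat.mul_comm (p ^ n - c) N1]; exact hj')
        rwa [hdiveq'] at h3
      refine hB.2 (B i (j / N1)) (B i ((j + N1 * m') / N1)) hBne m' hm'1 hm'2
        i hiB q hqB ⟨j / N1, hjd, rfl, by rw [hdiveq]⟩
        ⟨j' / N1, hj'd, eb1.symm, ?_⟩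
      rw [← hdiveq', ← eb2, hdiveq]
    · -- m % N1 ≥ 1 : use A's circular condition
      have hrlt : m % N1 < N1 := Nat.mod_lt _ hN1
      have hr1 : 1 ≤ m % N1 := Nat.one_le_iff_ne_zero.2 hr0
      have hmodi : (j + m) % N1 = (j % N1 + m % N1) % N1 := Nat.add_mod j m N1
      have hmodq : (j' + m) % N1 = (j' % N1 + m % N1) % N1 := Nat.add_mod j' m N1
      have hAne : A i (j % N1) ≠ A i ((j % N1 + m % N1) % N1) := by
        intro hEq
        have h4 := hA.2.1 i hiA _ (Nat.mod_lt _ hN1) _ (Nat.mod_lt _ hN1) hEq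
        have hu : j % N1 < N1 := Nat.mod_lt _ hN1
        by_cases hc' : j % N1 + m % N1 < N1
        · rw [Nat.mod_eq_of_lt hc'] at h4; omega
        · have h5 : (j % N1 + m % N1) % N1 = j % N1 + m % N1 - N1 := by
            rw [Nat.mod_eq_sub_mod (le_of_not_gt hc'), Nat.mod_eq_of_lt (by omega)]
          rw [h5] at h4; omega
      refine hA.2.2 (A i (j % N1)) (A i ((j % N1 + m % N1) % N1)) hAne (m % N1) hr1 hrlt
        i hiA q hqA ⟨j % N1, Nat.mod_lt _ hN1, rfl, by rw [← hmodi]⟩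
        ⟨j' % N1, Nat.mod_lt _ hN1, ea1.symm, ?_⟩
      rw [← hmodq, ← ea2, hmodi]
end

section
/- Let N1 be a positive integer with smallest prime factor p1, let A be a circular Florentine rectangle of size (p1 − 1) × N1 over Z_{N1}, let p be a prime, n a positive integer, and 1 ≤ c < p^n, and let B be a generalized quasi-Florentine rectangle of size p^n × (p^n + 1 − c) over Z_{p^n + 1}. Then the matrix D of Construction 1 (applied to A over Z_{N1} and B over Z_{p^n + 1}) is a generalized quasi-Florentine rectangle of size min{p1 − 1, p^n} × N1(p^n + 1 − c) over Z_{N1(p^n + 1)}. -/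
lemma decomp_eq (N1 N2 : ℕ) (h1 : 0 < N1) (h2 : 0 < N2)
    (x x' : ZMod N1) (y y' : ZMod N2)
    (h : ((x.val + N1 * y.val : ℕ) : ZMod (N1 * N2)) =
         ((x'.val + N1 * y'.val : ℕ) : ZMod (N1 * N2))) : x = x' ∧ y = y' := by
  haveI : NeZero N1 := ⟨h1.ne'⟩
  haveI : NeZero N2 := ⟨h2.ne'⟩
  have hx := ZMod.val_lt x
  have hx' := ZMod.val_lt x'
  have hb : ∀ (u : ZMod N1) (v : ZMod N2), u.val + N1 * v.val < N1 * N2 := by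
    intro u v
    have hu := ZMod.val_lt u
    have hv := ZMod.val_lt v
    calc u.val + N1 * v.val < N1 + N1 * v.val := by omega
      _ = N1 * (v.val + 1) := by ring
      _ ≤ N1 * N2 := Nat.mul_le_mul_left _ (by omega)
  have hnat : x.val + N1 * y.val = x'.val + N1 * y'.val := by
    have := congrArg ZMod.val h
    rwa [ZMod.val_cast_of_lt (hb x y), ZMod.val_cast_of_lt (hb x' y')] at this
  have hxv : x.val = x'.val := by
    have := congrArg (· % N1) hnat
    simpa [Nat.add_mul_mod_self_left, Nat.mod_eq_of_lt hx, Nat.mod_eq_of_lt hx'] using this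
  have hyv : y.val = y'.val := Nat.eq_of_mul_eq_mul_left h1 (by omega)
  exact ⟨ZMod.val_injective N1 hxv, ZMod.val_injective N2 hyv⟩

/-- Corollary, part ii: Construction 1 applied to a circular
Florentine rectangle of size `(p1 - 1) × N1` over `ZMod N1` (`p1` the smallest
prime factor of `N1`) and a generalized quasi-Florentine rectangle of size
`p^n × (p^n + 1 - c)` over `ZMod (p^n + 1)` yields a generalized
quasi-Florentine rectangle of size `min{p1 - 1, p^n} × N1 (p^n + 1 - c)` over
`ZMod (N1 * (p^n + 1))`. -/
theorem stmt4 (N1 p n c p1 : ℕ) (hN1 : 0 < N1) (hp1 : p1 = N1.minFac)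
    (hp : p.Prime) (hn : 0 < n) (hc1 : 1 ≤ c) (hc2 : c < p ^ n)
    (A : ℕ → ℕ → ZMod N1) (hA : IsCircFlorentine N1 (p1 - 1) A)
    (B : ℕ → ℕ → ZMod (p ^ n + 1))
    (hB : IsGQFR (p ^ n + 1) (p ^ n) (p ^ n + 1 - c) B) :
    IsGQFR (N1 * (p ^ n + 1)) (min (p1 - 1) (p ^ n)) (N1 * (p ^ n + 1 - c))
      (construct1 N1 (p ^ n + 1) N1 A B) := by

  obtain ⟨hAperm, hAC1, hAC2⟩ := hA
  obtain ⟨hBC1, hBC2⟩ := hB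
  have hN2 : 0 < p ^ n + 1 := by omega
  have hdc : ∀ i i' j j', construct1 N1 (p ^ n + 1) N1 A B i j =
      construct1 N1 (p ^ n + 1) N1 A B i' j' →
      A i (j % N1) = A i' (j' % N1) ∧ B i (j / N1) = B i' (j' / N1) := by
    intro i i' j j' h
    exact decomp_eq N1 (p ^ n + 1) hN1 hN2 _ _ _ _ h
  constructor
  · -- C1
    intro i hi j hj k hk hjk
    obtain ⟨h1, h2⟩ := hdc i i j k hjk
    have e1 : j % N1 = k % N1 :=
      hAC1 i (lt_of_lt_of_le hi (min_le_left _ _)) (j % N1) (Nat.mod_lt _ hN1)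
        (k % N1) (Nat.mod_lt _ hN1) h1
    have hjd : j / N1 < p ^ n + 1 - c :=
      (Nat.div_lt_iff_lt_mul hN1).2 (by rwa [mul_comm] at hj)
    have hkd : k / N1 < p ^ n + 1 - c :=
      (Nat.div_lt_iff_lt_mul hN1).2 (by rwa [mul_comm] at hk)
    have e2 : j / N1 = k / N1 :=
      hBC1 i (lt_of_lt_of_le hi (min_le_right _ _)) (j / N1) hjd (k / N1) hkd h2
    calc j = N1 * (j / N1) + j % N1 := (Nat.div_add_mod j N1).symm
      _ = N1 * (k / N1) + k % N1 := by rw [e1, e2]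
      _ = k := Nat.div_add_mod k N1
  · -- C2
    intro a b hab m hm1 hm2 i hi q hq ⟨j, hjm, hja, hjb⟩ ⟨j', hj'm, hj'a, hj'b⟩
    obtain ⟨hαa, hβa⟩ := hdc i q j j' (hja.trans hj'a.symm)
    obtain ⟨hαb, hβb⟩ := hdc i q (j + m) (j' + m) (hjb.trans hj'b.symm)
    by_cases hr : m % N1 = 0
    · -- m is a multiple of N1 : use B's condition C2
      have hmN : N1 ≤ m := by
        by_contra hcon
        push_neg at hcon
        rw [Nat.mod_eq_of_lt hcon] at hr
        omega
      have hq1 : 1 ≤ m / N1 := (Nat.one_le_div_iff hN1).2 hmN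
      have hmrw : m = N1 * (m / N1) := by
        conv_lhs => rw [← Nat.div_add_mod m N1]
        omega
      have hdiv : (j + m) / N1 = j / N1 + m / N1 := by
        conv_lhs => rw [hmrw]
        exact Nat.add_mul_div_left j (m / N1) hN1
      have hdiv' : (j' + m) / N1 = j' / N1 + m / N1 := by
        conv_lhs => rw [hmrw]
        exact Nat.add_mul_div_left j' (m / N1) hN1
      have hmod : (j + m) % N1 = j % N1 := by
        conv_lhs => rw [hmrw]
        exact Nat.add_mul_mod_self_left j N1 (m / N1)
      have hql : m / N1 < p ^ n + 1 - c := by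
        have : N1 * (m / N1) < N1 * (p ^ n + 1 - c) := by rw [← hmrw]; omega
        exact Nat.lt_of_mul_lt_mul_left this
      have hβne : B i (j / N1) ≠ B i ((j + m) / N1) := by
        intro hbe
        apply hab
        rw [← hja, ← hjb]
        simp only [construct1, hmod, hbe]
      have hwj : j / N1 + m / N1 < p ^ n + 1 - c := by
        rw [← hdiv]
        exact (Nat.div_lt_iff_lt_mul hN1).2 (by rwa [mul_comm] at hjm)
      have hwj' : j' / N1 + m / N1 < p ^ n + 1 - c := by
        rw [← hdiv']
        exact (Nat.div_lt_iff_lt_mul hN1).2 (by rwa [mul_comm] at hj'm)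
      exact hBC2 (B i (j / N1)) (B i ((j + m) / N1)) hβne (m / N1) hq1 hql
        i (lt_of_lt_of_le hi (min_le_right _ _))
        q (lt_of_lt_of_le hq (min_le_right _ _))
        ⟨j / N1, hwj, rfl, by rw [← hdiv]⟩
        ⟨j' / N1, hwj', hβa.symm, by rw [← hdiv']; exact hβb.symm⟩
    · -- m not a multiple of N1 : use A's circular condition C2
      have hr1 : 1 ≤ m % N1 := Nat.one_le_iff_ne_zero.2 hr
      have hrlt : m % N1 < N1 := Nat.mod_lt _ hN1
      have hmodj : (j % N1 + m % N1) % N1 = (j + m) % N1 := (Nat.add_mod j m N1).symm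
      have hmodj' : (j' % N1 + m % N1) % N1 = (j' + m) % N1 := (Nat.add_mod j' m N1).symm
      have hαne : A i (j % N1) ≠ A i ((j + m) % N1) := by
        intro hae
        have heq : j % N1 = (j + m) % N1 :=
          hAC1 i (lt_of_lt_of_le hi (min_le_left _ _)) (j % N1) (Nat.mod_lt _ hN1)
            ((j + m) % N1) (Nat.mod_lt _ hN1) hae
        rw [← hmodj] at heq
        set x := j % N1 with hx
        set r := m % N1 with hrr
        have hxlt : x < N1 := Nat.mod_lt _ hN1
        rcases Nat.lt_or_ge (x + r) N1 with h | h
        · rw [Nat.mod_eq_of_lt h] at heq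
          omega
        · have : (x + r) % N1 = x + r - N1 := by
            rw [Nat.mod_eq_sub_mod h, Nat.mod_eq_of_lt (by omega)]
          omega
      exact hAC2 (A i (j % N1)) (A i ((j + m) % N1)) hαne (m % N1) hr1 hrlt
        i (lt_of_lt_of_le hi (min_le_left _ _))
        q (lt_of_lt_of_le hq (min_le_left _ _))
        ⟨j % N1, Nat.mod_lt _ hN1, rfl, by rw [hmodj]⟩
        ⟨j' % N1, Nat.mod_lt _ hN1, hαa.symm, by rw [hmodj']; exact hαb.symm⟩
end

section
/- Let p be a prime and n a positive integer, let A be a circular quasi-Florentine rectangle of size p^n × (p^n − 1) over Z_{p^n}, let N1 be a positive integer with smallest prime factor p1, let 0 ≤ c < N1 − 1, and let B be a generalized quasi-Florentine rectangle of size (p1 − 1) × (N1 − c) over Z_{N1}. Then the matrix D of Construction 1 (applied to A over Z_{p^n} and B over Z_{N1}) is a generalized quasi-Florentine rectangle of size min{p1 − 1, p^n} × (N1 − c)(p^n − 1) over Z_{N1 p^n}. -/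
/-- Corollary, part i: Construction 1 applied to a circular
quasi-Florentine rectangle of size `p^n × (p^n - 1)` over `ZMod (p^n)` and a
generalized quasi-Florentine rectangle of size `(p1 - 1) × (N1 - c)` over
`ZMod N1` (`p1` the smallest prime factor of `N1`, `0 ≤ c < N1 - 1`) yields a
generalized quasi-Florentine rectangle of size
`min{p1 - 1, p^n} × (N1 - c)(p^n - 1)` over `ZMod (p^n * N1)`. -/
theorem stmt5 (p n N1 c p1 : ℕ) (hp : p.Prime) (hn : 0 < n) (hN1 : 0 < N1)
    (hp1 : p1 = N1.minFac) (hc : c < N1 - 1)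
    (A : ℕ → ℕ → ZMod (p ^ n)) (hA : IsGCQFR (p ^ n) (p ^ n) (p ^ n - 1) A)
    (B : ℕ → ℕ → ZMod N1) (hB : IsGQFR N1 (p1 - 1) (N1 - c) B) :
    IsGQFR (p ^ n * N1) (min (p1 - 1) (p ^ n)) ((N1 - c) * (p ^ n - 1))
      (construct1 (p ^ n) N1 (p ^ n - 1) A B) := by
  have hK2 : 2 ≤ p ^ n := Nat.one_lt_pow hn.ne' hp.one_lt
  have hKpos : 0 < p ^ n := by omega
  have hn'pos : 0 < p ^ n - 1 := by omega
  haveI : NeZero (p ^ n) := ⟨by omega⟩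
  haveI : NeZero N1 := ⟨by omega⟩
  haveI : NeZero (p ^ n * N1) := ⟨by positivity⟩
  set n' := p ^ n - 1 with hn'
  have key : ∀ i j (z : ZMod (p ^ n * N1)),
      construct1 (p ^ n) N1 n' A B i j = z →
      (A i (j % n')).val = z.val % p ^ n ∧ (B i (j / n')).val = z.val / p ^ n := by
    intro i j z h
    have hx : (A i (j % n')).val < p ^ n := ZMod.val_lt _
    have hy : (B i (j / n')).val < N1 := ZMod.val_lt _
    have hlt : (A i (j % n')).val + p ^ n * (B i (j / n')).val < p ^ n * N1 := by
      have h1 : (B i (j / n')).val + 1 ≤ N1 := hy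
      calc (A i (j % n')).val + p ^ n * (B i (j / n')).val
          < p ^ n * ((B i (j / n')).val + 1) := by ring_nf; omega
        _ ≤ p ^ n * N1 := Nat.mul_le_mul_left _ h1
    have hval : z.val = (A i (j % n')).val + p ^ n * (B i (j / n')).val := by
      rw [← h]
      show ((((A i (j % n')).val + p ^ n * (B i (j / n')).val : ℕ)) : ZMod (p ^ n * N1)).val = _
      rw [ZMod.val_natCast, Nat.mod_eq_of_lt hlt]
    constructor
    · rw [hval, Nat.add_mul_mod_self_left, Nat.mod_eq_of_lt hx]
    · rw [hval, Nat.add_mul_div_left _ _ hKpos, Nat.div_eq_of_lt hx, Nat.zero_add]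
  have vinj : ∀ {M : ℕ} [NeZero M] (x y : ZMod M), x.val = y.val → x = y :=
    fun x y h => ZMod.val_injective _ h
  constructor
  · intro i hi j hj k hk heq
    obtain ⟨ha1, ha2⟩ := key i j _ rfl
    obtain ⟨hb1, hb2⟩ := key i k _ heq.symm
    have e1 : A i (j % n') = A i (k % n') := vinj _ _ (ha1.trans hb1.symm)
    have e2 : B i (j / n') = B i (k / n') := vinj _ _ (ha2.trans hb2.symm)
    have hjd : j / n' < N1 - c := (Nat.div_lt_iff_lt_mul hn'pos).mpr hj
    have hkd : k / n' < N1 - c := (Nat.div_lt_iff_lt_mul hn'pos).mpr hk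
    have h1 := hA.1 i (lt_of_lt_of_le hi (min_le_right _ _)) _
      (Nat.mod_lt _ hn'pos) _ (Nat.mod_lt _ hn'pos) e1
    have h2 := hB.1 i (lt_of_lt_of_le hi (min_le_left _ _)) _ hjd _ hkd e2
    have d1 := Nat.div_add_mod j n'
    have d2 := Nat.div_add_mod k n'
    rw [h1, h2] at d1
    omega
  · rintro a b hab m hm1 hm2 i hi q hq ⟨j, hjm, hja, hjb⟩ ⟨k, hkm, hka, hkb⟩
    obtain ⟨e1a, e2a⟩ := key i j a hja
    obtain ⟨e1b, e2b⟩ := key i (j + m) b hjb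
    obtain ⟨f1a, f2a⟩ := key q k a hka
    obtain ⟨f1b, f2b⟩ := key q (k + m) b hkb
    by_cases hm0 : m % n' = 0
    · -- step acts only on the B component
      have hdvd : n' ∣ m := Nat.dvd_of_mod_eq_zero hm0
      have hmge : n' ≤ m := Nat.le_of_dvd (by omega) hdvd
      have hm2' : 1 ≤ m / n' := (Nat.one_le_div_iff hn'pos).mpr hmge
      have hdivadd : ∀ x, (x + m) / n' = x / n' + m / n' := by
        intro x
        obtain ⟨t, rfl⟩ := hdvd
        rw [Nat.add_mul_div_left _ _ hn'pos, Nat.mul_div_cancel_left _ hn'pos]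
      have hmodadd : ∀ x, (x + m) % n' = x % n' := by
        intro x
        obtain ⟨t, rfl⟩ := hdvd
        rw [Nat.add_mul_mod_self_left]
      have hmod : a.val % p ^ n = b.val % p ^ n := by
        rw [← e1a, ← e1b, hmodadd]
      have hdivne : a.val / p ^ n ≠ b.val / p ^ n := by
        intro h
        apply hab
        apply vinj
        have d1 := Nat.div_add_mod a.val (p ^ n)
        have d2 := Nat.div_add_mod b.val (p ^ n)
        rw [h, hmod] at d1
        omega
      have hBne : B i (j / n') ≠ B i ((j + m) / n') := by
        intro h
        exact hdivne (by rw [← e2a, ← e2b, h])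
      have hmd : m / n' < N1 - c := (Nat.div_lt_iff_lt_mul hn'pos).mpr hm2
      refine hB.2 (B i (j / n')) (B i ((j + m) / n')) hBne (m / n') hm2' hmd
        i (lt_of_lt_of_le hi (min_le_left _ _)) q (lt_of_lt_of_le hq (min_le_left _ _))
        ⟨j / n', ?_, rfl, by rw [← hdivadd]⟩
        ⟨k / n', ?_, ?_, ?_⟩
      · rw [← hdivadd]
        exact (Nat.div_lt_iff_lt_mul hn'pos).mpr hjm
      · rw [← hdivadd]
        exact (Nat.div_lt_iff_lt_mul hn'pos).mpr hkm
      · exact vinj _ _ (f2a.trans e2a.symm)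
      · rw [← hdivadd]
        exact vinj _ _ (f2b.trans e2b.symm)
    · -- step acts nontrivially on the A component; use circular condition
      have hm1' : 1 ≤ m % n' := by omega
      have hm1lt : m % n' < n' := Nat.mod_lt _ hn'pos
      have hshift : ∀ x, (x % n' + m % n') % n' = (x + m) % n' := by
        intro x; exact (Nat.add_mod x m n').symm
      have hAne : A i (j % n') ≠ A i ((j + m) % n') := by
        intro h
        have heq := hA.1 i (lt_of_lt_of_le hi (min_le_right _ _)) _
          (Nat.mod_lt _ hn'pos) _ (Nat.mod_lt _ hn'pos) h
        -- heq : j % n' = (j + m) % n'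
        have hme : (j % n') % n' = (j % n' + m % n') % n' := by
          rw [hshift, Nat.mod_eq_of_lt (Nat.mod_lt _ hn'pos), heq]
        have hd : n' ∣ (j % n' + m % n') - j % n' :=
          (Nat.modEq_iff_dvd' (Nat.le_add_right _ _)).mp hme
        rw [Nat.add_sub_cancel_left] at hd
        have := Nat.le_of_dvd (by omega) hd
        omega
      refine hA.2 (A i (j % n')) (A i ((j + m) % n')) hAne (m % n') hm1' hm1lt
        i (lt_of_lt_of_le hi (min_le_right _ _)) q (lt_of_lt_of_le hq (min_le_right _ _))
        ⟨j % n', Nat.mod_lt _ hn'pos, rfl, by rw [hshift]⟩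
        ⟨k % n', Nat.mod_lt _ hn'pos, ?_, ?_⟩
      · exact vinj _ _ (f1a.trans e1a.symm)
      · rw [hshift]
        exact vinj _ _ (f1b.trans e1b.symm)
end

section
/- Let p and p1 be primes, n and n1 positive integers, let A be a circular quasi-Florentine rectangle of size p^n × (p^n − 1) over Z_{p^n}, let 1 ≤ c < p1^{n1}, and let B be a generalized quasi-Florentine rectangle of size p1^{n1} × (p1^{n1} + 1 − c) over Z_{p1^{n1} + 1}. Then the matrix D of Construction 1 (applied to A over Z_{p^n} and B over Z_{p1^{n1} + 1}) is a generalized quasi-Florentine rectangle of size min{p^n, p1^{n1}} × (p^n − 1)(p1^{n1} + 1 − c) over Z_{p^n (p1^{n1} + 1)}. -/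
lemma decode_lemma {N1 N2 : ℕ} {x y x' y' : ℕ} (hx : x < N1) (hy : y < N2)
    (hx' : x' < N1) (hy' : y' < N2)
    (h : ((x + N1 * y : ℕ) : ZMod (N1 * N2)) = ((x' + N1 * y' : ℕ) : ZMod (N1 * N2))) :
    x = x' ∧ y = y' := by
  have hN1 : 0 < N1 := by omega
  have hN2 : 0 < N2 := by omega
  haveI : NeZero (N1 * N2) := ⟨(Nat.mul_pos hN1 hN2).ne'⟩
  have hb : ∀ u v : ℕ, u < N1 → v < N2 → u + N1 * v < N1 * N2 := by
    intro u v hu hv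
    calc u + N1 * v < N1 + N1 * v := by omega
      _ = N1 * (v + 1) := by ring
      _ ≤ N1 * N2 := Nat.mul_le_mul_left _ hv
  have h1 := congrArg ZMod.val h
  rw [ZMod.val_cast_of_lt (hb x y hx hy), ZMod.val_cast_of_lt (hb x' y' hx' hy')] at h1
  have hxx : x = x' := by
    have e1 : (x + N1 * y) % N1 = x := by
      rw [Nat.add_mul_mod_self_left, Nat.mod_eq_of_lt hx]
    have e2 : (x' + N1 * y') % N1 = x' := by
      rw [Nat.add_mul_mod_self_left, Nat.mod_eq_of_lt hx']
    rw [← e1, ← e2, h1]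
  refine ⟨hxx, ?_⟩
  have : N1 * y = N1 * y' := by omega
  exact Nat.eq_of_mul_eq_mul_left hN1 this

/-- Corollary, part iii: Construction 1 applied to a circular
quasi-Florentine rectangle of size `p^n × (p^n - 1)` over `ZMod (p^n)` and a
generalized quasi-Florentine rectangle of size `p1^n1 × (p1^n1 + 1 - c)` over
`ZMod (p1^n1 + 1)` (`1 ≤ c < p1^n1`) yields a generalized quasi-Florentine
rectangle of size `min{p^n, p1^n1} × (p^n - 1)(p1^n1 + 1 - c)` over
`ZMod (p^n * (p1^n1 + 1))`. -/
theorem stmt7 (p p1 n n1 c : ℕ) (hp : p.Prime) (hp1 : p1.Prime)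
    (hn : 0 < n) (hn1 : 0 < n1) (hc1 : 1 ≤ c) (hc2 : c < p1 ^ n1)
    (A : ℕ → ℕ → ZMod (p ^ n)) (hA : IsGCQFR (p ^ n) (p ^ n) (p ^ n - 1) A)
    (B : ℕ → ℕ → ZMod (p1 ^ n1 + 1))
    (hB : IsGQFR (p1 ^ n1 + 1) (p1 ^ n1) (p1 ^ n1 + 1 - c) B) :
    IsGQFR (p ^ n * (p1 ^ n1 + 1)) (min (p ^ n) (p1 ^ n1))
      ((p ^ n - 1) * (p1 ^ n1 + 1 - c))
      (construct1 (p ^ n) (p1 ^ n1 + 1) (p ^ n - 1) A B) := by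
  have hN1two : 2 ≤ p ^ n := Nat.one_lt_pow hn.ne' hp.one_lt
  have hP1two : 2 ≤ p1 ^ n1 := Nat.one_lt_pow hn1.ne' hp1.one_lt
  have hnApos : 0 < p ^ n - 1 := by omega
  haveI : NeZero (p ^ n) := ⟨by omega⟩
  haveI : NeZero (p1 ^ n1 + 1) := ⟨by omega⟩
  have hvalA : ∀ i j, (A i j).val < p ^ n := fun i j => ZMod.val_lt _
  have hvalB : ∀ i j, (B i j).val < p1 ^ n1 + 1 := fun i j => ZMod.val_lt _
  have key : ∀ i i' j j',
      construct1 (p ^ n) (p1 ^ n1 + 1) (p ^ n - 1) A B i j =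
        construct1 (p ^ n) (p1 ^ n1 + 1) (p ^ n - 1) A B i' j' →
      A i (j % (p ^ n - 1)) = A i' (j' % (p ^ n - 1)) ∧
        B i (j / (p ^ n - 1)) = B i' (j' / (p ^ n - 1)) := by
    intro i i' j j' h
    simp only [construct1] at h
    obtain ⟨h1, h2⟩ := decode_lemma (hvalA _ _) (hvalB _ _) (hvalA _ _) (hvalB _ _) h
    exact ⟨ZMod.val_injective _ h1, ZMod.val_injective _ h2⟩
  constructor
  · intro i hi j hj k hk heq
    have hiA : i < p ^ n := lt_of_lt_of_le hi (min_le_left _ _)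
    have hiB : i < p1 ^ n1 := lt_of_lt_of_le hi (min_le_right _ _)
    obtain ⟨h1, h2⟩ := key i i j k heq
    have e1 := hA.1 i hiA (j % (p ^ n - 1)) (Nat.mod_lt _ hnApos)
      (k % (p ^ n - 1)) (Nat.mod_lt _ hnApos) h1
    have e2 := hB.1 i hiB (j / (p ^ n - 1)) (Nat.div_lt_of_lt_mul hj)
      (k / (p ^ n - 1)) (Nat.div_lt_of_lt_mul hk) h2
    have dj := Nat.div_add_mod j (p ^ n - 1)
    have dk := Nat.div_add_mod k (p ^ n - 1)
    rw [← dj, ← dk, e1, e2]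
  · intro a b hab m hm1 hm2 i hi pr hpr hwi hwp
    obtain ⟨j, hjm, hja, hjb⟩ := hwi
    obtain ⟨j', hj'm, h'a, h'b⟩ := hwp
    have hiA : i < p ^ n := lt_of_lt_of_le hi (min_le_left _ _)
    have hiB : i < p1 ^ n1 := lt_of_lt_of_le hi (min_le_right _ _)
    have hprA : pr < p ^ n := lt_of_lt_of_le hpr (min_le_left _ _)
    have hprB : pr < p1 ^ n1 := lt_of_lt_of_le hpr (min_le_right _ _)
    obtain ⟨ea, eb⟩ := key i pr j j' (hja.trans h'a.symm)
    obtain ⟨fa, fb⟩ := key i pr (j + m) (j' + m) (hjb.trans h'b.symm)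
    by_cases hr : m % (p ^ n - 1) = 0
    · -- step is a multiple of p^n - 1 : use condition C2 of B
      obtain ⟨t, rfl⟩ : (p ^ n - 1) ∣ m := Nat.dvd_of_mod_eq_zero hr
      have ht1 : 1 ≤ t := by
        rcases Nat.eq_zero_or_pos t with h | h
        · subst h; simp at hm1
        · exact h
      have hjmod : (j + (p ^ n - 1) * t) % (p ^ n - 1) = j % (p ^ n - 1) := by
        simp [Nat.add_mul_mod_self_left]
      have hjdiv : (j + (p ^ n - 1) * t) / (p ^ n - 1) = j / (p ^ n - 1) + t :=
        Nat.add_mul_div_left _ _ hnApos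
      have hj'div : (j' + (p ^ n - 1) * t) / (p ^ n - 1) = j' / (p ^ n - 1) + t :=
        Nat.add_mul_div_left _ _ hnApos
      have hjtlt : j / (p ^ n - 1) + t < p1 ^ n1 + 1 - c := by
        rw [← hjdiv]; exact Nat.div_lt_of_lt_mul hjm
      have hj'tlt : j' / (p ^ n - 1) + t < p1 ^ n1 + 1 - c := by
        rw [← hj'div]; exact Nat.div_lt_of_lt_mul hj'm
      have hneB : B i (j / (p ^ n - 1)) ≠ B i (j / (p ^ n - 1) + t) := by
        intro h
        apply hab
        rw [← hja, ← hjb]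
        simp only [construct1, hjmod, hjdiv, h]
      refine hB.2 (B i (j / (p ^ n - 1))) (B i (j / (p ^ n - 1) + t)) hneB t ht1
        (lt_of_le_of_lt (Nat.le_add_left t _) hjtlt) i hiB pr hprB
        ⟨j / (p ^ n - 1), hjtlt, rfl, rfl⟩ ⟨j' / (p ^ n - 1), hj'tlt, eb.symm, ?_⟩
      have := fb
      rw [hjdiv, hj'div] at this
      exact this.symm
    · -- step not a multiple of p^n - 1 : use circular condition C2 of A
      have hrlt : m % (p ^ n - 1) < p ^ n - 1 := Nat.mod_lt _ hnApos
      have hr1 : 1 ≤ m % (p ^ n - 1) := Nat.one_le_iff_ne_zero.mpr hr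
      have hmodj : (j % (p ^ n - 1) + m % (p ^ n - 1)) % (p ^ n - 1) = (j + m) % (p ^ n - 1) :=
        (Nat.add_mod j m _).symm
      have hmodj' : (j' % (p ^ n - 1) + m % (p ^ n - 1)) % (p ^ n - 1) = (j' + m) % (p ^ n - 1) :=
        (Nat.add_mod j' m _).symm
      have hneA : A i (j % (p ^ n - 1)) ≠ A i ((j + m) % (p ^ n - 1)) := by
        intro h
        have heq := hA.1 i hiA (j % (p ^ n - 1)) (Nat.mod_lt _ hnApos)
          ((j + m) % (p ^ n - 1)) (Nat.mod_lt _ hnApos) h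
        rw [← hmodj] at heq
        have hxlt : j % (p ^ n - 1) < p ^ n - 1 := Nat.mod_lt _ hnApos
        rcases Nat.lt_or_ge (j % (p ^ n - 1) + m % (p ^ n - 1)) (p ^ n - 1) with hlt | hge
        · rw [Nat.mod_eq_of_lt hlt] at heq; omega
        · have hh : (j % (p ^ n - 1) + m % (p ^ n - 1)) % (p ^ n - 1) =
              j % (p ^ n - 1) + m % (p ^ n - 1) - (p ^ n - 1) := by
            rw [Nat.mod_eq_sub_mod hge, Nat.mod_eq_of_lt (by omega)]
          rw [hh] at heq; omega
      refine hA.2 (A i (j % (p ^ n - 1))) (A i ((j + m) % (p ^ n - 1))) hneA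
        (m % (p ^ n - 1)) hr1 hrlt i hiA pr hprA
        ⟨j % (p ^ n - 1), Nat.mod_lt _ hnApos, rfl, by rw [hmodj]⟩
        ⟨j' % (p ^ n - 1), Nat.mod_lt _ hnApos, ea.symm, ?_⟩
      rw [hmodj']
      exact fa.symm
end

section
/- Let A = (a_{i,j}) be a generalized quasi-Florentine rectangle of size s × n over Z_N. Then for every pair of distinct row indices 0 ≤ i ≠ p < s and every integer τ with 0 ≤ τ < n, the equation a_{i,j} = a_{p,j+τ} has at most one solution j in the range 0 ≤ j < n − τ. -/
lemma stmt8_aux (N s n : ℕ) (A : ℕ → ℕ → ZMod N) (hA : IsGQFR N s n A)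
    (i : ℕ) (hi : i < s) (p : ℕ) (hp : p < s) (τ : ℕ) (hτ : τ < n)
    (j1 : ℕ) (h1 : j1 < n - τ) (j2 : ℕ) (h2 : j2 < n - τ)
    (e1 : A i j1 = A p (j1 + τ)) (e2 : A i j2 = A p (j2 + τ))
    (hlt : j1 < j2) : i = p := by
  obtain ⟨hC1, hC2⟩ := hA
  have hj1n : j1 < n := by omega
  have hj2n : j2 < n := by omega
  have hab : A i j1 ≠ A i j2 := fun h => by
    have := hC1 i hi j1 hj1n j2 hj2n h; omega
  have key1 : j1 + (j2 - j1) = j2 := by omega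
  have key2 : j1 + τ + (j2 - j1) = j2 + τ := by omega
  exact hC2 (A i j1) (A i j2) hab (j2 - j1) (by omega) (by omega) i hi p hp
    ⟨j1, by omega, rfl, congrArg (A i) key1⟩
    ⟨j1 + τ, by omega, e1.symm, by rw [key2, ← e2]⟩

/-- Lemma: in a generalized quasi-Florentine rectangle of size
`s × n` over `ZMod N`, for any two distinct rows `i ≠ p` and any shift
`0 ≤ τ < n`, the equation `a_{i,j} = a_{p,j+τ}` has at most one solution `j`
with `0 ≤ j < n - τ`. -/
theorem stmt8 (N s n : ℕ) (A : ℕ → ℕ → ZMod N) (hA : IsGQFR N s n A) :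
    ∀ i < s, ∀ p < s, i ≠ p → ∀ τ : ℕ, τ < n →
      ∀ j1 < n - τ, ∀ j2 < n - τ,
        A i j1 = A p (j1 + τ) → A i j2 = A p (j2 + τ) → j1 = j2 := by
  intro i hi p hp hip τ hτ j1 h1 j2 h2 e1 e2
  rcases lt_trichotomy j1 j2 with h | h | h
  · exact absurd (stmt8_aux N s n A hA i hi p hp τ hτ j1 h1 j2 h2 e1 e2 h) hip
  · exact h
  · exact absurd (stmt8_aux N s n A hA i hi p hp τ hτ j2 h2 j1 h1 e2 e1 h) hip
end

section
/- Let A be a K × L generalized quasi-Florentine rectangle over Z_N and B a Butson-type Hadamard matrix BH(N,r), and let C = {C^{(0)},…,C^{(K−1)}} be the set of Construction 2. Then for every 0 ≤ k < K and every pair of integers (τ,ν) with |τ| < L, |ν| < L and (τ,ν) ≠ (0,0), the aperiodic auto-ambiguity function sum vanishes: AF_{C^{(k)}}(τ,ν) = Σ_{m=0}^{N−1} AF_{c_m^{(k)}}(τ,ν) = 0. -/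
lemma expand_aux (r : ℕ) (x y : ℤ) :
    Complex.exp (2 * (Real.pi : ℂ) * Complex.I * ((x : ℤ) : ℂ) / (r : ℂ)) *
      (starRingEnd ℂ) (Complex.exp (2 * (Real.pi : ℂ) * Complex.I * ((y : ℤ) : ℂ) / (r : ℂ)))
    = Complex.exp (2 * (Real.pi : ℂ) * Complex.I * ((x - y : ℤ) : ℂ) / (r : ℂ)) := by
  rw [← Complex.exp_conj, ← Complex.exp_add]
  congr 1
  have h : (starRingEnd ℂ) (2 * (Real.pi : ℂ) * Complex.I * ((y : ℤ) : ℂ) / (r : ℂ))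
      = -(2 * (Real.pi : ℂ) * Complex.I * ((y : ℤ) : ℂ) / (r : ℂ)) := by
    simp [map_div₀, Complex.conj_I, map_ofNat]
    ring
  rw [h]
  push_cast
  ring

lemma geom_aux (L : ℕ) (hL : 0 < L) (ν : ℤ) (hν : ν ≠ 0) (h : |ν| < (L : ℤ)) :
    ∑ t ∈ Finset.range L,
      Complex.exp (2 * (Real.pi : ℂ) * Complex.I * ((ν * t : ℤ) : ℂ) / (L : ℂ)) = 0 := by
  have hL0 : (L : ℂ) ≠ 0 := Nat.cast_ne_zero.mpr hL.ne'
  set ζ := Complex.exp (2 * (Real.pi : ℂ) * Complex.I * (ν : ℂ) / (L : ℂ)) with hζdef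
  have hterm : ∀ t : ℕ,
      Complex.exp (2 * (Real.pi : ℂ) * Complex.I * ((ν * t : ℤ) : ℂ) / (L : ℂ)) = ζ ^ t := by
    intro t
    rw [hζdef, ← Complex.exp_nat_mul]
    congr 1
    push_cast
    ring
  have hζ1 : ζ ≠ 1 := by
    intro hc
    rw [hζdef, Complex.exp_eq_one_iff] at hc
    obtain ⟨n, hn⟩ := hc
    have h2 : (ν : ℂ) = n * L := by
      field_simp at hn
      have h2pi : (2 : ℂ) * Real.pi * Complex.I ≠ 0 := by
        simpa [mul_comm, mul_assoc] using Complex.two_pi_I_ne_zero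
      apply mul_left_cancel₀ h2pi
      rw [hn]; ring
    have h3 : ν = n * L := by exact_mod_cast h2
    rcases eq_or_ne n 0 with rfl | hn0
    · simp at h3; exact hν h3
    · have h4 : (L : ℤ) ≤ |ν| := by
        rw [h3, abs_mul]
        have h5 : 1 ≤ |n| := Int.one_le_abs hn0
        have h6 : |(L : ℤ)| = (L : ℤ) := abs_of_nonneg (Int.ofNat_nonneg L)
        nlinarith [Int.ofNat_nonneg L]
      omega
  calc ∑ t ∈ Finset.range L,
        Complex.exp (2 * (Real.pi : ℂ) * Complex.I * ((ν * t : ℤ) : ℂ) / (L : ℂ))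
      = ∑ t ∈ Finset.range L, ζ ^ t := Finset.sum_congr rfl fun t _ => hterm t
    _ = (ζ ^ L - 1) / (ζ - 1) := geom_sum_eq hζ1 L
    _ = 0 := by
        rw [show ζ ^ L = Complex.exp ((L : ℂ) * (2 * (Real.pi : ℂ) * Complex.I * (ν : ℂ) / (L : ℂ)))
              from (Complex.exp_nat_mul _ L).symm,
            show (L : ℂ) * (2 * (Real.pi : ℂ) * Complex.I * (ν : ℂ) / (L : ℂ))
              = (ν : ℂ) * (2 * (Real.pi : ℂ) * Complex.I) by field_simp,
            Complex.exp_int_mul_two_pi_mul_I]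
        simp
/-- Aperiodic cross-ambiguity function of two length-`L` sequences at integer
delay `τ` and integer Doppler `ν`. -/
noncomputable def apAF (L : ℕ) (a b : ℕ → ℂ) (τ ν : ℤ) : ℂ :=
  if 0 ≤ τ then
    ∑ t ∈ Finset.range (L - τ.toNat),
      a t * (starRingEnd ℂ) (b (t + τ.toNat)) *
        Complex.exp (2 * (Real.pi : ℂ) * Complex.I * ((ν * t : ℤ) : ℂ) / (L : ℂ))
  else
    ∑ t ∈ Finset.range (L - (-τ).toNat),
      a (t + (-τ).toNat) * (starRingEnd ℂ) (b t) *
        Complex.exp (2 * (Real.pi : ℂ) * Complex.I *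
          ((ν * (t + (-τ).toNat) : ℤ) : ℂ) / (L : ℂ))

/-- Butson-type Hadamard matrix `BH(N, r)` given by its exponent matrix `b`:
the matrix `(ω_r^{b_{i,j}})` satisfies `B Bᴴ = N I`. -/
def IsBH (N r : ℕ) (b : ℕ → ℕ → ℤ) : Prop :=
  ∀ i < N, ∀ j < N,
    (∑ k ∈ Finset.range N,
        Complex.exp (2 * (Real.pi : ℂ) * Complex.I * ((b i k - b j k : ℤ) : ℂ) / (r : ℂ)))
      = if i = j then (N : ℂ) else 0

/-- Construction 2: the sequence `c_m^{(k)}` of length `L`, with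
`c_m^{(k)}(n) = ω_r^{b_{a_{k,n}, m}}`. -/
noncomputable def seqC (N r : ℕ) (A : ℕ → ℕ → ZMod N) (b : ℕ → ℕ → ℤ) (k m : ℕ) :
    ℕ → ℂ :=
  fun n => Complex.exp (2 * (Real.pi : ℂ) * Complex.I *
    ((b (A k n).val m : ℤ) : ℂ) / (r : ℂ))

/-- Ambiguity-function sum of the DRCSs `C^{(k1)}` and `C^{(k2)}` of
Construction 2: `AF_{C^{(k1)},C^{(k2)}}(τ,ν) = Σ_{m<N} AF_{c_m^{(k1)},c_m^{(k2)}}(τ,ν)`. -/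
noncomputable def AFsum (L N r : ℕ) (A : ℕ → ℕ → ZMod N) (b : ℕ → ℕ → ℤ)
    (k1 k2 : ℕ) (τ ν : ℤ) : ℂ :=
  ∑ m ∈ Finset.range N, apAF L (seqC N r A b k1 m) (seqC N r A b k2 m) τ ν

/-- for the DRCS set of Construction 2 built from a `K × L`
generalized quasi-Florentine rectangle over `ZMod N` and a Butson-type
Hadamard matrix `BH(N,r)`, every aperiodic auto-ambiguity function sum
vanishes on `(-L,L) × (-L,L) \ {(0,0)}`. -/
theorem stmt9 (N r K L : ℕ) (hN : 2 ≤ N) (hL : 2 ≤ L) (hLN : L ≤ N)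
    (A : ℕ → ℕ → ZMod N) (hA : IsGQFR N K L A)
    (b : ℕ → ℕ → ℤ) (hB : IsBH N r b) :
    ∀ k < K, ∀ τ ν : ℤ, |τ| < (L : ℤ) → |ν| < (L : ℤ) → (τ, ν) ≠ (0, 0) →
      AFsum L N r A b k k τ ν = 0 := by
  intro k hk τ ν hτ hν hne
  haveI : NeZero N := ⟨by omega⟩
  have hC1 := hA.1
  have hval : ∀ s t : ℕ, (A k s).val = (A k t).val → A k s = A k t := by
    intro s t h
    exact ZMod.val_injective N h
  rcases le_or_gt 0 τ with hτ0 | hτ0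
  · -- τ ≥ 0
    unfold AFsum apAF seqC
    simp only [if_pos hτ0]
    rw [Finset.sum_comm]
    have step : ∀ t ∈ Finset.range (L - τ.toNat),
        (∑ m ∈ Finset.range N,
          Complex.exp (2 * (Real.pi : ℂ) * Complex.I * ((b (A k t).val m : ℤ) : ℂ) / (r : ℂ)) *
            (starRingEnd ℂ) (Complex.exp (2 * (Real.pi : ℂ) * Complex.I *
              ((b (A k (t + τ.toNat)).val m : ℤ) : ℂ) / (r : ℂ))) *
            Complex.exp (2 * (Real.pi : ℂ) * Complex.I * ((ν * t : ℤ) : ℂ) / (L : ℂ)))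
        = (if (A k t).val = (A k (t + τ.toNat)).val then (N : ℂ) else 0) *
            Complex.exp (2 * (Real.pi : ℂ) * Complex.I * ((ν * t : ℤ) : ℂ) / (L : ℂ)) := by
      intro t ht
      rw [← Finset.sum_mul]
      congr 1
      rw [Finset.sum_congr rfl (fun m _ => expand_aux r _ _)]
      exact hB _ (ZMod.val_lt _) _ (ZMod.val_lt _)
    rw [Finset.sum_congr rfl step]
    rcases eq_or_ne τ 0 with rfl | hτne
    · -- τ = 0, ν ≠ 0
      have hν0 : ν ≠ 0 := by
        intro h; exact hne (by simp [h])
      simp only [Int.toNat_zero, Nat.add_zero, Nat.sub_zero, if_pos rfl]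
      rw [← Finset.mul_sum]
      rw [geom_aux L (by omega) ν hν0 hν]
      simp
    · -- τ > 0
      have hτ1 : 1 ≤ τ.toNat := by omega
      apply Finset.sum_eq_zero
      intro t ht
      have htL : t < L - τ.toNat := Finset.mem_range.mp ht
      have hτL : τ.toNat < L := by
        have := abs_of_nonneg hτ0 ▸ hτ
        omega
      have hne2 : (A k t).val ≠ (A k (t + τ.toNat)).val := by
        intro h
        have h2 := hval _ _ h
        have := hC1 k hk t (by omega) (t + τ.toNat) (by omega) h2
        omega
      rw [if_neg hne2, zero_mul]
  · -- τ < 0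
    unfold AFsum apAF seqC
    simp only [if_neg (not_le.mpr hτ0)]
    rw [Finset.sum_comm]
    have hτ1 : 1 ≤ (-τ).toNat := by omega
    have hτL : (-τ).toNat < L := by
      have := abs_of_neg hτ0 ▸ hτ
      omega
    apply Finset.sum_eq_zero
    intro t ht
    have htL : t < L - (-τ).toNat := Finset.mem_range.mp ht
    rw [← Finset.sum_mul]
    have hsum : (∑ m ∈ Finset.range N,
        Complex.exp (2 * (Real.pi : ℂ) * Complex.I *
          ((b (A k (t + (-τ).toNat)).val m : ℤ) : ℂ) / (r : ℂ)) *
          (starRingEnd ℂ) (Complex.exp (2 * (Real.pi : ℂ) * Complex.I *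
            ((b (A k t).val m : ℤ) : ℂ) / (r : ℂ)))) = 0 := by
      rw [Finset.sum_congr rfl (fun m _ => expand_aux r _ _)]
      rw [hB _ (ZMod.val_lt _) _ (ZMod.val_lt _)]
      have hne2 : (A k (t + (-τ).toNat)).val ≠ (A k t).val := by
        intro h
        have h2 := hval _ _ h
        have := hC1 k hk (t + (-τ).toNat) (by omega) t (by omega) h2
        omega
      rw [if_neg hne2]
    rw [hsum, zero_mul]
end

section
/- Let A be a K × L generalized quasi-Florentine rectangle over Z_N and B a Butson-type Hadamard matrix BH(N,r), and let C = {C^{(0)},…,C^{(K−1)}} be the set of Construction 2. Then for all 0 ≤ k1 ≠ k2 < K and all integers (τ,ν) with |τ| < L and |ν| < L, the aperiodic cross-ambiguity function sum satisfies |AF_{C^{(k1)},C^{(k2)}}(τ,ν)| ≤ N; more precisely, its value has modulus 0 or N. -/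
lemma exp_mul_conj (r : ℕ) (x y : ℤ) :
    Complex.exp (2 * (Real.pi : ℂ) * Complex.I * (x : ℂ) / (r : ℂ)) *
      (starRingEnd ℂ) (Complex.exp (2 * (Real.pi : ℂ) * Complex.I * (y : ℂ) / (r : ℂ)))
    = Complex.exp (2 * (Real.pi : ℂ) * Complex.I * ((x - y : ℤ) : ℂ) / (r : ℂ)) := by
  rw [← Complex.exp_conj, ← Complex.exp_add]
  congr 1
  simp only [map_div₀, map_mul, Complex.conj_I, map_ofNat, Complex.conj_ofReal, map_intCast,
    map_natCast]
  push_cast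
  ring

lemma abs_exp_unit (x : ℤ) (L : ℕ) :
    ‖Complex.exp (2 * (Real.pi : ℂ) * Complex.I * (x : ℂ) / (L : ℂ))‖ = 1 := by
  have h : 2 * (Real.pi : ℂ) * Complex.I * (x : ℂ) / (L : ℂ)
      = ((2 * Real.pi * x / L : ℝ) : ℂ) * Complex.I := by push_cast; ring
  rw [h, Complex.norm_exp_ofReal_mul_I]

lemma innerSum10 (N r : ℕ) (hN : 2 ≤ N) (b : ℕ → ℕ → ℤ) (hB : IsBH N r b) (x y : ZMod N) :
    (∑ m ∈ Finset.range N,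
      Complex.exp (2 * (Real.pi : ℂ) * Complex.I * ((b x.val m : ℤ) : ℂ) / (r : ℂ)) *
        (starRingEnd ℂ)
          (Complex.exp (2 * (Real.pi : ℂ) * Complex.I * ((b y.val m : ℤ) : ℂ) / (r : ℂ))))
      = if x = y then (N : ℂ) else 0 := by
  have hNe : NeZero N := ⟨by omega⟩
  rw [Finset.sum_congr rfl (fun m _ => exp_mul_conj r (b x.val m) (b y.val m)),
    hB x.val (ZMod.val_lt x) y.val (ZMod.val_lt y)]
  by_cases h : x = y
  · rw [if_pos (by rw [h]), if_pos h]
  · rw [if_neg (fun hv => h (ZMod.val_injective N hv)), if_neg h]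

lemma card_filter_le_one (N K L : ℕ) (A : ℕ → ℕ → ZMod N) (hA : IsGQFR N K L A)
    (k1 k2 : ℕ) (hk1 : k1 < K) (hk2 : k2 < K) (hne : k1 ≠ k2)
    (M d1 d2 : ℕ) (h1 : M + d1 ≤ L) (h2 : M + d2 ≤ L) :
    ((Finset.range M).filter (fun t => A k1 (t + d1) = A k2 (t + d2))).card ≤ 1 := by
  rw [Finset.card_le_one]
  intro t1 ht1 t2 ht2
  simp only [Finset.mem_filter, Finset.mem_range] at ht1 ht2
  have key : ∀ s1 s2 : ℕ, s1 < M → s2 < M → s1 < s2 →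
      A k1 (s1 + d1) = A k2 (s1 + d2) → A k1 (s2 + d1) = A k2 (s2 + d2) → False := by
    intro s1 s2 hs1 hs2 hlt e1 e2
    have hab : A k1 (s1 + d1) ≠ A k1 (s2 + d1) := by
      intro h
      have := hA.1 k1 hk1 (s1 + d1) (by omega) (s2 + d1) (by omega) h
      omega
    exact hne (hA.2 (A k1 (s1 + d1)) (A k1 (s2 + d1)) hab (s2 - s1) (by omega) (by omega)
      k1 hk1 k2 hk2
      ⟨s1 + d1, by omega, rfl, by rw [show s1 + d1 + (s2 - s1) = s2 + d1 by omega]⟩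
      ⟨s1 + d2, by omega, e1.symm, by
        rw [show s1 + d2 + (s2 - s1) = s2 + d2 by omega]; exact e2.symm⟩)
  rcases lt_trichotomy t1 t2 with h | h | h
  · exact absurd (key t1 t2 ht1.1 ht2.1 h ht1.2 ht2.2) not_false
  · exact h
  · exact absurd (key t2 t1 ht2.1 ht1.1 h ht2.2 ht1.2) not_false

lemma final_step (N M : ℕ) (hN : 2 ≤ N) (c : ℕ → Prop) [DecidablePred c]
    (hcard : ((Finset.range M).filter (fun t => c t)).card ≤ 1)
    (φ : ℕ → ℂ) (hφ : ∀ t, ‖φ t‖ = 1) :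
    ‖∑ t ∈ Finset.range M, (if c t then (N : ℂ) else 0) * φ t‖ ≤ N ∧
      (‖∑ t ∈ Finset.range M, (if c t then (N : ℂ) else 0) * φ t‖ = 0 ∨
        ‖∑ t ∈ Finset.range M, (if c t then (N : ℂ) else 0) * φ t‖ = N) := by
  have hsum : ∑ t ∈ Finset.range M, (if c t then (N : ℂ) else 0) * φ t
      = ∑ t ∈ (Finset.range M).filter (fun t => c t), (N : ℂ) * φ t := by
    rw [Finset.sum_filter]
    exact Finset.sum_congr rfl fun t _ => by by_cases h : c t <;> simp [h]
  rcases ((Finset.range M).filter (fun t => c t)).eq_empty_or_nonempty with h | ⟨t0, ht0⟩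
  · rw [hsum, h, Finset.sum_empty, norm_zero]
    exact ⟨by positivity, Or.inl rfl⟩
  · have hS : (Finset.range M).filter (fun t => c t) = {t0} :=
      Finset.eq_singleton_iff_unique_mem.mpr
        ⟨ht0, fun x hx => Finset.card_le_one.mp hcard x hx t0 ht0⟩
    rw [hsum, hS, Finset.sum_singleton]
    have habs : ‖(N : ℂ) * φ t0‖ = N := by
      rw [norm_mul, hφ, Complex.norm_natCast, mul_one]
    exact ⟨le_of_eq habs, Or.inr habs⟩

/-- for the DRCS set of Construction 2, every aperiodic
cross-ambiguity function sum between distinct DRCSs has magnitude at most `N`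
on `(-L,L) × (-L,L)`; more precisely its modulus is `0` or `N`. -/
theorem stmt10 (N r K L : ℕ) (hN : 2 ≤ N) (hL : 2 ≤ L) (hLN : L ≤ N)
    (A : ℕ → ℕ → ZMod N) (hA : IsGQFR N K L A)
    (b : ℕ → ℕ → ℤ) (hB : IsBH N r b) :
    ∀ k1 < K, ∀ k2 < K, k1 ≠ k2 → ∀ τ ν : ℤ, |τ| < (L : ℤ) → |ν| < (L : ℤ) →
      ‖AFsum L N r A b k1 k2 τ ν‖ ≤ N ∧
        (‖AFsum L N r A b k1 k2 τ ν‖ = 0 ∨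
          ‖AFsum L N r A b k1 k2 τ ν‖ = N) := by
  intro k1 hk1 k2 hk2 hne τ ν hτL hνL
  have hτ' := abs_lt.mp hτL
  rcases le_or_gt 0 τ with hτ | hτ
  · have hrw : AFsum L N r A b k1 k2 τ ν
        = ∑ t ∈ Finset.range (L - τ.toNat),
            (if A k1 (t + 0) = A k2 (t + τ.toNat) then (N : ℂ) else 0) *
              Complex.exp (2 * (Real.pi : ℂ) * Complex.I * ((ν * t : ℤ) : ℂ) / (L : ℂ)) := by
      unfold AFsum apAF seqC
      simp only [if_pos hτ]
      rw [Finset.sum_comm]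
      refine Finset.sum_congr rfl fun t ht => ?_
      rw [← Finset.sum_mul, innerSum10 N r hN b hB (A k1 t) (A k2 (t + τ.toNat))]
      norm_num
    rw [hrw]
    exact final_step N (L - τ.toNat) hN _
      (card_filter_le_one N K L A hA k1 k2 hk1 hk2 hne (L - τ.toNat) 0 τ.toNat
        (by omega) (by omega)) _ (fun t => abs_exp_unit (ν * t) L)
  · have hrw : AFsum L N r A b k1 k2 τ ν
        = ∑ t ∈ Finset.range (L - (-τ).toNat),
            (if A k1 (t + (-τ).toNat) = A k2 (t + 0) then (N : ℂ) else 0) *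
              Complex.exp (2 * (Real.pi : ℂ) * Complex.I *
                ((ν * (t + (-τ).toNat) : ℤ) : ℂ) / (L : ℂ)) := by
      unfold AFsum apAF seqC
      simp only [if_neg (not_le.mpr hτ)]
      rw [Finset.sum_comm]
      refine Finset.sum_congr rfl fun t ht => ?_
      rw [← Finset.sum_mul, innerSum10 N r hN b hB (A k1 (t + (-τ).toNat)) (A k2 t)]
      norm_num
    rw [hrw]
    exact final_step N (L - (-τ).toNat) hN _
      (card_filter_le_one N K L A hA k1 k2 hk1 hk2 hne (L - (-τ).toNat) (-τ).toNat 0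
        (by omega) (by omega)) _ (fun t => abs_exp_unit (ν * (t + (-τ).toNat)) L)
end

section
/- Let A be a K × L generalized quasi-Florentine rectangle over Z_N (2 ≤ L ≤ N) and B a Butson-type Hadamard matrix BH(N,r). Then the set C = {C^{(0)},…,C^{(K−1)}} of Construction 2 is an aperiodic (K, N, L, N, Π)-DRCS set with Π = (−L, L) × (−L, L); that is, θ̂_max(C) ≤ N. -/
noncomputable def Ee (r : ℕ) (x : ℤ) : ℂ :=
  Complex.exp (2 * (Real.pi : ℂ) * Complex.I * ((x : ℤ) : ℂ) / (r : ℂ))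

lemma Ee_mul_conj (r : ℕ) (x y : ℤ) :
    Ee r x * (starRingEnd ℂ) (Ee r y) = Ee r (x - y) := by
  unfold Ee
  rw [← Complex.exp_conj, ← Complex.exp_add]
  congr 1
  rw [map_div₀]
  simp only [map_mul, Complex.conj_I, Complex.conj_ofReal, map_ofNat, map_intCast, map_natCast]
  push_cast
  ring

lemma Ee_abs (r : ℕ) (x : ℤ) : ‖Ee r x‖ = 1 := by
  unfold Ee
  rw [show 2 * (Real.pi : ℂ) * Complex.I * ((x : ℤ) : ℂ) / (r : ℂ)
      = ((2 * Real.pi * (x : ℝ) / (r : ℝ) : ℝ) : ℂ) * Complex.I by push_cast; ring]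
  exact Complex.norm_exp_ofReal_mul_I _

lemma key_sum (N r : ℕ) [NeZero N] (b : ℕ → ℕ → ℤ) (hB : IsBH N r b)
    (g h : ℕ → ZMod N) (w : ℕ → ℂ) (T : Finset ℕ) :
    ∑ m ∈ Finset.range N, ∑ t ∈ T,
        Ee r (b (g t).val m) * (starRingEnd ℂ) (Ee r (b (h t).val m)) * w t
      = ∑ t ∈ T, w t * (if g t = h t then (N : ℂ) else 0) := by
  rw [Finset.sum_comm]
  refine Finset.sum_congr rfl fun t _ => ?_
  calc ∑ m ∈ Finset.range N,
        Ee r (b (g t).val m) * (starRingEnd ℂ) (Ee r (b (h t).val m)) * w t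
      = (∑ m ∈ Finset.range N, Ee r (b (g t).val m - b (h t).val m)) * w t := by
        rw [Finset.sum_mul]
        exact Finset.sum_congr rfl fun m _ => by rw [Ee_mul_conj]
    _ = (if g t = h t then (N : ℂ) else 0) * w t := by
        have hBe := hB (g t).val (ZMod.val_lt _) (h t).val (ZMod.val_lt _)
        simp only [Ee]
        rw [hBe]
        have hiff : (g t).val = (h t).val ↔ g t = h t :=
          ⟨fun hh => ZMod.val_injective _ hh, fun hh => by rw [hh]⟩
        rw [if_congr hiff rfl rfl]
    _ = w t * (if g t = h t then (N : ℂ) else 0) := mul_comm _ _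

lemma AFsum_pos (L N r : ℕ) [NeZero N] (A : ℕ → ℕ → ZMod N) (b : ℕ → ℕ → ℤ)
    (hB : IsBH N r b) (k1 k2 : ℕ) (τ ν : ℤ) (hτ : 0 ≤ τ) :
    AFsum L N r A b k1 k2 τ ν
      = ∑ t ∈ Finset.range (L - τ.toNat),
          Ee L (ν * t) * (if A k1 t = A k2 (t + τ.toNat) then (N : ℂ) else 0) := by
  unfold AFsum apAF
  simp only [if_pos hτ]
  exact key_sum N r b hB (fun t => A k1 t) (fun t => A k2 (t + τ.toNat))
    (fun t => Ee L (ν * t)) (Finset.range (L - τ.toNat))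

lemma AFsum_neg (L N r : ℕ) [NeZero N] (A : ℕ → ℕ → ZMod N) (b : ℕ → ℕ → ℤ)
    (hB : IsBH N r b) (k1 k2 : ℕ) (τ ν : ℤ) (hτ : τ < 0) :
    AFsum L N r A b k1 k2 τ ν
      = ∑ t ∈ Finset.range (L - (-τ).toNat),
          Ee L (ν * (t + (-τ).toNat))
            * (if A k1 (t + (-τ).toNat) = A k2 t then (N : ℂ) else 0) := by
  unfold AFsum apAF
  simp only [if_neg (not_le.mpr hτ)]
  exact key_sum N r b hB (fun t => A k1 (t + (-τ).toNat)) (fun t => A k2 t)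
    (fun t => Ee L (ν * (t + (-τ).toNat))) (Finset.range (L - (-τ).toNat))

lemma abs_le_of_card (N : ℕ) (T : Finset ℕ) (w : ℕ → ℂ)
    (hw : ∀ t ∈ T, ‖w t‖ = 1)
    (P : ℕ → Prop) [DecidablePred P] (hc : (T.filter P).card ≤ 1) :
    ‖∑ t ∈ T, w t * (if P t then (N : ℂ) else 0)‖ ≤ N := by
  calc ‖∑ t ∈ T, w t * (if P t then (N : ℂ) else 0)‖
      ≤ ∑ t ∈ T, ‖w t * (if P t then (N : ℂ) else 0)‖ :=
        norm_sum_le _ _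
    _ = ∑ t ∈ T, (if P t then (N : ℝ) else 0) := by
        refine Finset.sum_congr rfl fun t ht => ?_
        rw [norm_mul, hw t ht, one_mul]
        by_cases h : P t <;> simp [h]
    _ = (T.filter P).card * N := by
        rw [← Finset.sum_filter, Finset.sum_const, nsmul_eq_mul]
    _ ≤ 1 * N := by
        apply mul_le_mul_of_nonneg_right _ (Nat.cast_nonneg N)
        exact_mod_cast hc
    _ = N := one_mul _

lemma gqfr_core {N K L : ℕ} {A : ℕ → ℕ → ZMod N} (hA : IsGQFR N K L A)
    (k1 k2 : ℕ) (h1 : k1 < K) (h2 : k2 < K) (u t1 t2 : ℕ)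
    (hlt : t1 < t2) (ht2 : t2 + u < L)
    (e1 : A k1 t1 = A k2 (t1 + u)) (e2 : A k1 t2 = A k2 (t2 + u)) : k1 = k2 := by
  have hac : A k1 t1 ≠ A k1 t2 := by
    intro hh
    have := hA.1 k1 h1 t1 (by omega) t2 (by omega) hh
    omega
  exact hA.2 (A k1 t1) (A k1 t2) hac (t2 - t1) (by omega) (by omega) k1 h1 k2 h2
    ⟨t1, by omega, rfl, by rw [show t1 + (t2 - t1) = t2 from by omega]⟩
    ⟨t1 + u, by omega, e1.symm,
      by rw [show t1 + u + (t2 - t1) = t2 + u from by omega]; exact e2.symm⟩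

lemma cross_card_pos {N K L : ℕ} {A : ℕ → ℕ → ZMod N} (hA : IsGQFR N K L A)
    (k1 k2 : ℕ) (h1 : k1 < K) (h2 : k2 < K) (hne : k1 ≠ k2) (u : ℕ) :
    ((Finset.range (L - u)).filter (fun t => A k1 t = A k2 (t + u))).card ≤ 1 := by
  rw [Finset.card_le_one]
  intro t1 ht1 t2 ht2
  rw [Finset.mem_filter, Finset.mem_range] at ht1 ht2
  by_contra hne12
  rcases lt_or_gt_of_ne hne12 with hlt | hlt
  · exact hne (gqfr_core hA k1 k2 h1 h2 u t1 t2 hlt (by omega) ht1.2 ht2.2)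
  · exact hne (gqfr_core hA k1 k2 h1 h2 u t2 t1 hlt (by omega) ht2.2 ht1.2)

lemma cross_card_neg {N K L : ℕ} {A : ℕ → ℕ → ZMod N} (hA : IsGQFR N K L A)
    (k1 k2 : ℕ) (h1 : k1 < K) (h2 : k2 < K) (hne : k1 ≠ k2) (u : ℕ) :
    ((Finset.range (L - u)).filter (fun t => A k1 (t + u) = A k2 t)).card ≤ 1 := by
  rw [Finset.card_le_one]
  intro t1 ht1 t2 ht2
  rw [Finset.mem_filter, Finset.mem_range] at ht1 ht2
  by_contra hne12
  rcases lt_or_gt_of_ne hne12 with hlt | hlt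
  · exact hne (gqfr_core hA k2 k1 h2 h1 u t1 t2 hlt (by omega) ht1.2.symm ht2.2.symm).symm
  · exact hne (gqfr_core hA k2 k1 h2 h1 u t2 t1 hlt (by omega) ht2.2.symm ht1.2.symm).symm

lemma auto_card_pos {N K L : ℕ} {A : ℕ → ℕ → ZMod N} (hA : IsGQFR N K L A)
    (k : ℕ) (hk : k < K) (u : ℕ) (hu : 1 ≤ u) :
    ((Finset.range (L - u)).filter (fun t => A k t = A k (t + u))) = ∅ := by
  rw [Finset.filter_eq_empty_iff]
  intro t ht h
  rw [Finset.mem_range] at ht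
  have := hA.1 k hk t (by omega) (t + u) (by omega) h
  omega

lemma auto_card_neg {N K L : ℕ} {A : ℕ → ℕ → ZMod N} (hA : IsGQFR N K L A)
    (k : ℕ) (hk : k < K) (u : ℕ) (hu : 1 ≤ u) :
    ((Finset.range (L - u)).filter (fun t => A k (t + u) = A k t)) = ∅ := by
  rw [Finset.filter_eq_empty_iff]
  intro t ht h
  rw [Finset.mem_range] at ht
  have := hA.1 k hk (t + u) (by omega) t (by omega) h
  omega

lemma sum_Ee_zero (L : ℕ) (hL : 0 < L) (ν : ℤ) (hν : ν ≠ 0) (hνL : |ν| < (L : ℤ)) :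
    ∑ t ∈ Finset.range L, Ee L (ν * t) = 0 := by
  have hL0 : (L : ℂ) ≠ 0 := Nat.cast_ne_zero.mpr hL.ne'
  have hπ : (Real.pi : ℂ) ≠ 0 := by exact_mod_cast Real.pi_ne_zero
  have h2 : (2 * (Real.pi : ℂ) * Complex.I) ≠ 0 := by
    simp [Complex.I_ne_zero, hπ]
  have hz : ∀ t : ℕ, Ee L (ν * t) = (Ee L ν) ^ t := by
    intro t
    unfold Ee
    rw [← Complex.exp_nat_mul]
    congr 1
    push_cast
    ring
  simp_rw [hz]
  have hz1 : Ee L ν ≠ 1 := by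
    intro hh
    unfold Ee at hh
    rw [Complex.exp_eq_one_iff] at hh
    obtain ⟨n, hn⟩ := hh
    field_simp [hL0] at hn
    have hνc : (ν : ℂ) = (n : ℂ) * (L : ℂ) := by
      apply mul_left_cancel₀ h2
      linear_combination (2 * (Real.pi : ℂ) * Complex.I) * hn
    have hνn : ν = n * L := by exact_mod_cast hνc
    rcases eq_or_ne n 0 with h0 | h0
    · rw [h0, zero_mul] at hνn; exact hν hνn
    · have h1n : 1 ≤ |n| := Int.one_le_abs h0
      have : (L : ℤ) ≤ |ν| := by
        rw [hνn, abs_mul]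
        calc (L : ℤ) = 1 * |(L : ℤ)| := by
              rw [one_mul, abs_of_nonneg (by positivity)]
          _ ≤ |n| * |(L : ℤ)| := by
              apply mul_le_mul_of_nonneg_right h1n (abs_nonneg _)
      omega
  rw [geom_sum_eq hz1]
  have hpow : (Ee L ν) ^ L = 1 := by
    unfold Ee
    rw [← Complex.exp_nat_mul]
    rw [show (L : ℂ) * (2 * (Real.pi : ℂ) * Complex.I * ((ν : ℤ) : ℂ) / (L : ℂ))
        = (ν : ℂ) * (2 * (Real.pi : ℂ) * Complex.I) from by field_simp]
    exact Complex.exp_int_mul_two_pi_mul_I ν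
  rw [hpow, sub_self, zero_div]

/-- Theorem 3: the set of Construction 2 is an aperiodic
`(K, N, L, N, Π)`-DRCS set with `Π = (-L,L) × (-L,L)`, i.e. all auto-AF sums
at `(τ,ν) ≠ (0,0)` and all cross-AF sums on `Π` have magnitude at most `N`. -/
theorem stmt11 (N r K L : ℕ) (hN : 2 ≤ N) (hL : 2 ≤ L) (hLN : L ≤ N)
    (A : ℕ → ℕ → ZMod N) (hA : IsGQFR N K L A)
    (b : ℕ → ℕ → ℤ) (hB : IsBH N r b) :
    (∀ k < K, ∀ τ ν : ℤ, |τ| < (L : ℤ) → |ν| < (L : ℤ) → (τ, ν) ≠ (0, 0) →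
        ‖AFsum L N r A b k k τ ν‖ ≤ N) ∧
      (∀ k1 < K, ∀ k2 < K, k1 ≠ k2 → ∀ τ ν : ℤ, |τ| < (L : ℤ) → |ν| < (L : ℤ) →
        ‖AFsum L N r A b k1 k2 τ ν‖ ≤ N) := by
  haveI : NeZero N := ⟨by omega⟩
  have hL0 : 0 < L := by omega
  constructor
  · intro k hk τ ν haτ haν hne0
    rcases lt_trichotomy τ 0 with h | h | h
    · rw [AFsum_neg L N r A b hB k k τ ν h]
      refine abs_le_of_card N _ _ (fun t _ => Ee_abs _ _) _ ?_
      rw [auto_card_neg hA k hk ((-τ).toNat) (by omega)]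
      simp
    · subst h
      have hν0 : ν ≠ 0 := fun hh => hne0 (by rw [hh])
      rw [AFsum_pos L N r A b hB k k 0 ν le_rfl]
      simp only [Int.toNat_zero, Nat.sub_zero]
      have hcongr : ∀ t ∈ Finset.range L,
          Ee L (ν * t) * (if A k t = A k (t + 0) then (N : ℂ) else 0)
            = Ee L (ν * t) * (N : ℂ) := fun t _ => by simp
      rw [Finset.sum_congr rfl hcongr, ← Finset.sum_mul,
        sum_Ee_zero L hL0 ν hν0 haν, zero_mul, norm_zero]
      exact Nat.cast_nonneg N
    · rw [AFsum_pos L N r A b hB k k τ ν (le_of_lt h)]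
      refine abs_le_of_card N _ _ (fun t _ => Ee_abs _ _) _ ?_
      rw [auto_card_pos hA k hk τ.toNat (by omega)]
      simp
  · intro k1 hk1 k2 hk2 hne τ ν haτ haν
    rcases le_or_gt 0 τ with h | h
    · rw [AFsum_pos L N r A b hB k1 k2 τ ν h]
      refine abs_le_of_card N _ _ (fun t _ => Ee_abs _ _) _ ?_
      exact cross_card_pos hA k1 k2 hk1 hk2 hne τ.toNat
    · rw [AFsum_neg L N r A b hB k1 k2 τ ν h]
      refine abs_le_of_card N _ _ (fun t _ => Ee_abs _ _) _ ?_
      exact cross_card_neg hA k1 k2 hk1 hk2 hne (-τ).toNat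
end

section
/- Let p be a prime, n a positive integer, N1 a positive integer with smallest prime factor p1, and 0 ≤ c < N1 − 1. Let A be a generalized quasi-Florentine rectangle of size K × L over Z_N with K = min{p1 − 1, p^n}, L = (N1 − c)(p^n − 1) and N = N1 p^n, and let B be a Butson-type Hadamard matrix BH(N, r). Then the set C of Construction 2 is an aperiodic (K, N1 p^n, (N1 − c)(p^n − 1), N1 p^n, Π)-DRCS set with Π = (−(N1 − c)(p^n − 1), (N1 − c)(p^n − 1)) × (−(N1 − c)(p^n − 1), (N1 − c)(p^n − 1)); that is, θ̂_max(C) ≤ N1 p^n. -/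
section Aux

open Finset Complex

private lemma exp_mul_conj_exp (r : ℕ) (a c : ℤ) :
    Complex.exp (2 * (Real.pi : ℂ) * Complex.I * (a : ℂ) / (r : ℂ)) *
      (starRingEnd ℂ) (Complex.exp (2 * (Real.pi : ℂ) * Complex.I * (c : ℂ) / (r : ℂ))) =
    Complex.exp (2 * (Real.pi : ℂ) * Complex.I * ((a - c : ℤ) : ℂ) / (r : ℂ)) := by
  rw [← Complex.exp_conj, ← Complex.exp_add]
  congr 1
  have : (starRingEnd ℂ) (2 * (Real.pi : ℂ) * Complex.I * (c : ℂ) / (r : ℂ))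
      = 2 * (Real.pi : ℂ) * (-Complex.I) * (c : ℂ) / (r : ℂ) := by
    simp [map_div₀, Complex.conj_I, map_ofNat]
  rw [this]
  push_cast
  ring

private lemma inner_sum_eq {N : ℕ} (r : ℕ) (b : ℕ → ℕ → ℤ) (hB : IsBH N r b)
    {x y : ℕ} (hx : x < N) (hy : y < N) :
    ∑ m ∈ Finset.range N,
        Complex.exp (2 * (Real.pi : ℂ) * Complex.I * ((b x m : ℤ) : ℂ) / (r : ℂ)) *
          (starRingEnd ℂ)
            (Complex.exp (2 * (Real.pi : ℂ) * Complex.I * ((b y m : ℤ) : ℂ) / (r : ℂ)))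
      = if x = y then (N : ℂ) else 0 := by
  calc ∑ m ∈ Finset.range N,
        Complex.exp (2 * (Real.pi : ℂ) * Complex.I * ((b x m : ℤ) : ℂ) / (r : ℂ)) *
          (starRingEnd ℂ)
            (Complex.exp (2 * (Real.pi : ℂ) * Complex.I * ((b y m : ℤ) : ℂ) / (r : ℂ)))
      = ∑ m ∈ Finset.range N,
          Complex.exp (2 * (Real.pi : ℂ) * Complex.I * ((b x m - b y m : ℤ) : ℂ) / (r : ℂ)) :=
        Finset.sum_congr rfl fun m _ => exp_mul_conj_exp r _ _
    _ = if x = y then (N : ℂ) else 0 := hB x hx y hy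

private lemma AFsum_eq_pos (L N r : ℕ) [NeZero N] (A : ℕ → ℕ → ZMod N)
    (b : ℕ → ℕ → ℤ) (hB : IsBH N r b) (k1 k2 : ℕ) (τ ν : ℤ) (hτ : 0 ≤ τ) :
    AFsum L N r A b k1 k2 τ ν =
      ∑ t ∈ Finset.range (L - τ.toNat),
        (if A k1 t = A k2 (t + τ.toNat) then (N : ℂ) else 0) *
          Complex.exp (2 * (Real.pi : ℂ) * Complex.I * ((ν * t : ℤ) : ℂ) / (L : ℂ)) := by
  unfold AFsum apAF seqC
  simp only [if_pos hτ]
  rw [Finset.sum_comm]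
  refine Finset.sum_congr rfl fun t _ => ?_
  rw [← Finset.sum_mul]
  congr 1
  rw [inner_sum_eq r b hB (ZMod.val_lt _) (ZMod.val_lt _)]
  refine if_congr ?_ rfl rfl
  exact ⟨fun h => ZMod.val_injective N h, fun h => by rw [h]⟩

private lemma AFsum_eq_neg (L N r : ℕ) [NeZero N] (A : ℕ → ℕ → ZMod N)
    (b : ℕ → ℕ → ℤ) (hB : IsBH N r b) (k1 k2 : ℕ) (τ ν : ℤ) (hτ : ¬ 0 ≤ τ) :
    AFsum L N r A b k1 k2 τ ν =
      ∑ t ∈ Finset.range (L - (-τ).toNat),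
        (if A k1 (t + (-τ).toNat) = A k2 t then (N : ℂ) else 0) *
          Complex.exp (2 * (Real.pi : ℂ) * Complex.I *
            ((ν * (t + (-τ).toNat) : ℤ) : ℂ) / (L : ℂ)) := by
  unfold AFsum apAF seqC
  simp only [if_neg hτ]
  rw [Finset.sum_comm]
  refine Finset.sum_congr rfl fun t _ => ?_
  rw [← Finset.sum_mul]
  congr 1
  rw [inner_sum_eq r b hB (ZMod.val_lt _) (ZMod.val_lt _)]
  refine if_congr ?_ rfl rfl
  exact ⟨fun h => ZMod.val_injective N h, fun h => by rw [h]⟩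

private lemma abs_phase (L : ℕ) (a : ℤ) :
    ‖Complex.exp (2 * (Real.pi : ℂ) * Complex.I * (a : ℂ) / (L : ℂ))‖ = 1 := by
  have h : 2 * (Real.pi : ℂ) * Complex.I * (a : ℂ) / (L : ℂ)
      = ((2 * Real.pi * a / L : ℝ) : ℂ) * Complex.I := by
    push_cast
    ring
  rw [h, Complex.norm_exp_ofReal_mul_I]

private lemma abs_sum_le_bound (M N : ℕ) (P : ℕ → Prop) [DecidablePred P] (φ : ℕ → ℂ)
    (hφ : ∀ t, ‖φ t‖ = 1)
    (huniq : ∀ t, t < M → P t → ∀ t', t' < M → P t' → t = t') :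
    ‖∑ t ∈ Finset.range M, (if P t then (N : ℂ) else 0) * φ t‖ ≤ N := by
  have h1 : ∑ t ∈ Finset.range M, (if P t then (N : ℂ) else 0) * φ t
      = ∑ t ∈ (Finset.range M).filter P, (N : ℂ) * φ t := by
    rw [Finset.sum_filter]
    exact Finset.sum_congr rfl fun t _ => by split <;> simp
  have hcard : ((Finset.range M).filter P).card ≤ 1 := by
    refine Finset.card_le_one.mpr fun a ha b hb => ?_
    simp only [Finset.mem_filter, Finset.mem_range] at ha hb
    exact huniq a ha.1 ha.2 b hb.1 hb.2
  rw [h1]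
  calc ‖∑ t ∈ (Finset.range M).filter P, (N : ℂ) * φ t‖
      ≤ ∑ t ∈ (Finset.range M).filter P, ‖(N : ℂ) * φ t‖ :=
        norm_sum_le _ _
    _ = ∑ t ∈ (Finset.range M).filter P, (N : ℝ) := by
        refine Finset.sum_congr rfl fun t _ => ?_
        rw [norm_mul, hφ t, Complex.norm_natCast, mul_one]
    _ = ((Finset.range M).filter P).card * (N : ℝ) := by
        rw [Finset.sum_const, nsmul_eq_mul]
    _ ≤ 1 * (N : ℝ) := by
        have : (((Finset.range M).filter P).card : ℝ) ≤ 1 := by exact_mod_cast hcard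
        exact mul_le_mul_of_nonneg_right this (Nat.cast_nonneg N)
    _ = N := one_mul _

private lemma geom_phase_zero (L : ℕ) (ν : ℤ) (hν : ν ≠ 0) (hνL : |ν| < (L : ℤ)) :
    ∑ t ∈ Finset.range L,
        Complex.exp (2 * (Real.pi : ℂ) * Complex.I * ((ν * t : ℤ) : ℂ) / (L : ℂ)) = 0 := by
  have hL : 0 < L := by
    have := abs_pos.mpr hν
    omega
  have hLc : (L : ℂ) ≠ 0 := Nat.cast_ne_zero.mpr hL.ne'
  set x := Complex.exp (2 * (Real.pi : ℂ) * Complex.I * (ν : ℂ) / (L : ℂ)) with hx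
  have hterm : ∀ t : ℕ,
      Complex.exp (2 * (Real.pi : ℂ) * Complex.I * ((ν * t : ℤ) : ℂ) / (L : ℂ)) = x ^ t := by
    intro t
    rw [hx, ← Complex.exp_nat_mul]
    congr 1
    push_cast
    ring
  have hx1 : x ≠ 1 := by
    intro h
    rw [hx, Complex.exp_eq_one_iff] at h
    obtain ⟨m, hm⟩ := h
    have h2 : (2 : ℂ) * (Real.pi : ℂ) * Complex.I ≠ 0 := by
      simp [Real.pi_ne_zero, Complex.I_ne_zero, Complex.ofReal_ne_zero]
    have hν' : (ν : ℂ) = m * L := by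
      have hm' := congrArg (· * (L : ℂ)) hm
      rw [div_mul_cancel₀ _ hLc] at hm'
      apply mul_left_cancel₀ h2
      linear_combination hm'
    have hνZ : ν = m * L := by exact_mod_cast hν'
    rcases eq_or_ne m 0 with rfl | hm0
    · simp at hνZ; exact hν hνZ
    · have : (L : ℤ) ≤ |ν| := by
        rw [hνZ, abs_mul, abs_of_nonneg (by positivity : (0:ℤ) ≤ (L:ℤ))]
        nlinarith [Int.one_le_abs hm0]
      omega
  have hxL : x ^ L = 1 := by
    rw [hx, ← Complex.exp_nat_mul]
    have : (L : ℂ) * (2 * (Real.pi : ℂ) * Complex.I * (ν : ℂ) / (L : ℂ))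
        = (ν : ℂ) * (2 * (Real.pi : ℂ) * Complex.I) := by
      field_simp
    rw [this, Complex.exp_int_mul_two_pi_mul_I]
  calc ∑ t ∈ Finset.range L,
        Complex.exp (2 * (Real.pi : ℂ) * Complex.I * ((ν * t : ℤ) : ℂ) / (L : ℂ))
      = ∑ t ∈ Finset.range L, x ^ t := Finset.sum_congr rfl fun t _ => hterm t
    _ = (x ^ L - 1) / (x - 1) := geom_sum_eq hx1 L
    _ = 0 := by rw [hxL]; simp

private lemma uniq_aux {N K L : ℕ} {A : ℕ → ℕ → ZMod N} (hA : IsGQFR N K L A)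
    {k1 k2 : ℕ} (h1 : k1 < K) (h2 : k2 < K) {m : ℕ}
    (hcase : k1 ≠ k2 ∨ (k1 = k2 ∧ 1 ≤ m)) :
    ∀ t, t < L - m → (A k1 t = A k2 (t + m)) →
      ∀ t', t' < L - m → (A k1 t' = A k2 (t' + m)) → t = t' := by
  have key : ∀ t t', t < L - m → t' < L - m → t < t' →
      (A k1 t = A k2 (t + m)) → (A k1 t' = A k2 (t' + m)) → k1 ≠ k2 → False := by
    intro t t' ht ht' htt e e' hne
    have htL : t < L := lt_of_lt_of_le ht (Nat.sub_le L m)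
    have ht'L : t' < L := lt_of_lt_of_le ht' (Nat.sub_le L m)
    have htmL : t + m < L := by omega
    have ht'mL : t' + m < L := by omega
    have hab : A k1 t ≠ A k1 t' := fun h =>
      absurd (hA.1 k1 h1 t htL t' ht'L h) (Nat.ne_of_lt htt)
    have hd1 : 1 ≤ t' - t := by omega
    have hdL : t' - t < L := by omega
    have ex1 : ∃ j, j + (t' - t) < L ∧ A k1 j = A k1 t ∧ A k1 (j + (t' - t)) = A k1 t' :=
      ⟨t, by rw [Nat.add_sub_cancel' (le_of_lt htt)]; exact ⟨ht'L, rfl, rfl⟩⟩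
    have ex2 : ∃ j, j + (t' - t) < L ∧ A k2 j = A k1 t ∧ A k2 (j + (t' - t)) = A k1 t' := by
      refine ⟨t + m, ?_, e.symm, ?_⟩
      · omega
      · have : t + m + (t' - t) = t' + m := by omega
        rw [this, ← e']
    exact hne (hA.2 (A k1 t) (A k1 t') hab (t' - t) hd1 hdL k1 h1 k2 h2 ex1 ex2)
  intro t ht e t' ht' e'
  rcases hcase with hne | ⟨heq, hm1⟩
  · rcases lt_trichotomy t t' with h | h | h
    · exact absurd (key t t' ht ht' h e e' hne) not_false
    · exact h
    · exact absurd (key t' t ht' ht h e' e hne) not_false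
  · subst heq
    have htL : t < L := lt_of_lt_of_le ht (Nat.sub_le L m)
    have htmL : t + m < L := by omega
    have := hA.1 k1 h1 t htL (t + m) htmL e
    omega

end Aux

/-- Corollary, case iii: with `K = min{p1 - 1, p^n}`,
`L = (N1 - c)(p^n - 1)` and `N = N1 p^n` (`p1` the smallest prime factor of
`N1`, `0 ≤ c < N1 - 1`), the set of Construction 2 is an aperiodic
`(K, N1 p^n, (N1 - c)(p^n - 1), N1 p^n, Π)`-DRCS set with
`Π = (-L,L) × (-L,L)`: all relevant AF magnitudes are at most `N1 p^n`. -/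
theorem stmt14 (p n N1 c p1 r K L N : ℕ)
    (hp : p.Prime) (hn : 0 < n) (hN1 : 0 < N1) (hp1 : p1 = N1.minFac)
    (hc : c < N1 - 1)
    (hK : K = min (p1 - 1) (p ^ n)) (hL : L = (N1 - c) * (p ^ n - 1))
    (hN : N = N1 * p ^ n)
    (A : ℕ → ℕ → ZMod N) (hA : IsGQFR N K L A)
    (b : ℕ → ℕ → ℤ) (hB : IsBH N r b) :
    (∀ k < K, ∀ τ ν : ℤ, |τ| < (L : ℤ) → |ν| < (L : ℤ) → (τ, ν) ≠ (0, 0) →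
        ‖AFsum L N r A b k k τ ν‖ ≤ N1 * p ^ n) ∧
      (∀ k1 < K, ∀ k2 < K, k1 ≠ k2 → ∀ τ ν : ℤ, |τ| < (L : ℤ) → |ν| < (L : ℤ) →
        ‖AFsum L N r A b k1 k2 τ ν‖ ≤ N1 * p ^ n) := by

  have hN0 : 0 < N := by
    rw [hN]
    exact Nat.mul_pos hN1 (Nat.pow_pos hp.pos)
  haveI : NeZero N := ⟨hN0.ne'⟩
  have hNR : (N : ℝ) = (N1 : ℝ) * (p : ℝ) ^ n := by rw [hN]; push_cast; ring
  constructor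
  · intro k hk τ ν hτL hνL hτν
    rw [← hNR]
    rcases eq_or_ne τ 0 with rfl | hτ0
    · -- τ = 0, so ν ≠ 0; geometric sum vanishes
      have hν0 : ν ≠ 0 := fun h => hτν (by rw [h])
      rw [AFsum_eq_pos L N r A b hB k k 0 ν le_rfl]
      simp only [Int.toNat_zero, Nat.sub_zero, Nat.add_zero, if_pos rfl]
      rw [← Finset.mul_sum]
      rw [geom_phase_zero L ν hν0 hνL, mul_zero, norm_zero]
      positivity
    · rcases le_or_gt 0 τ with hτ | hτ
      · rw [AFsum_eq_pos L N r A b hB k k τ ν hτ]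
        refine abs_sum_le_bound _ _ _ _ (fun t => abs_phase L _) ?_
        exact uniq_aux hA hk hk (Or.inr ⟨rfl, by omega⟩)
      · rw [AFsum_eq_neg L N r A b hB k k τ ν (not_le.mpr hτ)]
        refine abs_sum_le_bound _ _ _ _ (fun t => abs_phase L _) ?_
        intro t ht e t' ht' e'
        exact uniq_aux hA hk hk (Or.inr ⟨rfl, by omega⟩) t ht e.symm t' ht' e'.symm
  · intro k1 hk1 k2 hk2 hne τ ν hτL hνL
    rw [← hNR]
    rcases le_or_gt 0 τ with hτ | hτ
    · rw [AFsum_eq_pos L N r A b hB k1 k2 τ ν hτ]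
      refine abs_sum_le_bound _ _ _ _ (fun t => abs_phase L _) ?_
      exact uniq_aux hA hk1 hk2 (Or.inl hne)
    · rw [AFsum_eq_neg L N r A b hB k1 k2 τ ν (not_le.mpr hτ)]
      refine abs_sum_le_bound _ _ _ _ (fun t => abs_phase L _) ?_
      intro t ht e t' ht' e'
      exact uniq_aux hA hk2 hk1 (Or.inl hne.symm) t ht e.symm t' ht' e'.symm
end

section
/- Let p and p1 be primes, n and n1 positive integers, and 1 ≤ c < p1^{n1}. Let A be a generalized quasi-Florentine rectangle of size K × L over Z_N with K = min{p^n, p1^{n1}}, L = (p^n − 1)(p1^{n1} + 1 − c) and N = p^n(p1^{n1} + 1), and let B be a Butson-type Hadamard matrix BH(N, r). Then the set C of Construction 2 is an aperiodic (K, p^n(p1^{n1} + 1), (p^n − 1)(p1^{n1} + 1 − c), p^n(p1^{n1} + 1), Π)-DRCS set with Π = (−(p^n − 1)(p1^{n1} + 1 − c), (p^n − 1)(p1^{n1} + 1 − c)) × (−(p^n − 1)(p1^{n1} + 1 − c), (p^n − 1)(p1^{n1} + 1 − c)); that is, θ̂_max(C) ≤ p^n(p1^{n1} + 1). -/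
lemma absE (L : ℕ) (x : ℤ) :
    ‖Complex.exp (2 * (Real.pi : ℂ) * Complex.I * (x : ℂ) / (L : ℂ))‖ = 1 := by
  have h : (2 * (Real.pi : ℂ) * Complex.I * (x : ℂ) / (L : ℂ))
      = ((2 * Real.pi * (x : ℝ) / (L : ℝ) : ℝ) : ℂ) * Complex.I := by
    push_cast; ring
  rw [h, Complex.norm_exp_ofReal_mul_I]

lemma innerSum (N r : ℕ) (b : ℕ → ℕ → ℤ) (hB : IsBH N r b) {u v : ℕ}
    (hu : u < N) (hv : v < N) :
    ∑ m ∈ Finset.range N,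
      (Complex.exp (2 * (Real.pi : ℂ) * Complex.I * ((b u m : ℤ) : ℂ) / (r : ℂ)) *
        (starRingEnd ℂ) (Complex.exp (2 * (Real.pi : ℂ) * Complex.I * ((b v m : ℤ) : ℂ) / (r : ℂ))))
      = if u = v then (N : ℂ) else 0 := by
  rw [← hB u hu v hv]
  refine Finset.sum_congr rfl fun m _ => ?_
  rw [← Complex.exp_conj, ← Complex.exp_add]
  congr 1
  have hc : (starRingEnd ℂ) (2 * (Real.pi : ℂ) * Complex.I * ((b v m : ℤ) : ℂ) / (r : ℂ))
      = -(2 * (Real.pi : ℂ) * Complex.I * ((b v m : ℤ) : ℂ) / (r : ℂ)) := by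
    simp [map_div₀, map_ofNat, Complex.conj_I, Complex.conj_ofReal]
    ring
  rw [hc]
  push_cast
  ring
lemma AFsum_eq (L N r : ℕ) [NeZero N] (A : ℕ → ℕ → ZMod N) (b : ℕ → ℕ → ℤ)
    (hB : IsBH N r b) (k1 k2 : ℕ) (τ ν : ℤ) :
    AFsum L N r A b k1 k2 τ ν =
      if 0 ≤ τ then
        ∑ t ∈ Finset.range (L - τ.toNat),
          (if A k1 t = A k2 (t + τ.toNat) then (N : ℂ) else 0) *
            Complex.exp (2 * (Real.pi : ℂ) * Complex.I * ((ν * t : ℤ) : ℂ) / (L : ℂ))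
      else
        ∑ t ∈ Finset.range (L - (-τ).toNat),
          (if A k1 (t + (-τ).toNat) = A k2 t then (N : ℂ) else 0) *
            Complex.exp (2 * (Real.pi : ℂ) * Complex.I *
              ((ν * (t + (-τ).toNat) : ℤ) : ℂ) / (L : ℂ)) := by
  have hval : ∀ (x y : ZMod N), (x.val = y.val) ↔ x = y :=
    fun x y => ⟨fun h => ZMod.val_injective N h, fun h => by rw [h]⟩
  by_cases h : 0 ≤ τ
  · simp only [AFsum, apAF, if_pos h]
    rw [Finset.sum_comm]
    refine Finset.sum_congr rfl fun t _ => ?_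
    rw [← Finset.sum_mul]
    congr 1
    have := innerSum N r b hB (ZMod.val_lt (A k1 t)) (ZMod.val_lt (A k2 (t + τ.toNat)))
    simp only [seqC]
    rw [this]
    simp only [hval]
  · simp only [AFsum, apAF, if_neg h]
    rw [Finset.sum_comm]
    refine Finset.sum_congr rfl fun t _ => ?_
    rw [← Finset.sum_mul]
    congr 1
    have := innerSum N r b hB (ZMod.val_lt (A k1 (t + (-τ).toNat))) (ZMod.val_lt (A k2 t))
    simp only [seqC]
    rw [this]
    simp only [hval]

lemma gqfr_uniq {N K L : ℕ} {A : ℕ → ℕ → ZMod N} (hA : IsGQFR N K L A)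
    {k1 k2 : ℕ} (hk1 : k1 < K) (hk2 : k2 < K) (d : ℕ)
    (hne : k1 ≠ k2 ∨ d ≠ 0) :
    ∀ t1 ∈ Finset.range (L - d), ∀ t2 ∈ Finset.range (L - d),
      A k1 t1 = A k2 (t1 + d) → A k1 t2 = A k2 (t2 + d) → t1 = t2 := by
  obtain ⟨hC1, hC2⟩ := hA
  have key : ∀ s1 s2 : ℕ, s1 < L - d → s2 < L - d → s1 < s2 → k1 ≠ k2 →
      A k1 s1 = A k2 (s1 + d) → A k1 s2 = A k2 (s2 + d) → False := by
    intro s1 s2 hs1 hs2 hlt hk e1 e2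
    have hab : A k1 s1 ≠ A k1 s2 := by
      intro h
      have := hC1 k1 hk1 s1 (by omega) s2 (by omega) h
      omega
    refine hk (hC2 (A k1 s1) (A k1 s2) hab (s2 - s1) (by omega) (by omega) k1 hk1 k2 hk2
      ⟨s1, by omega, rfl, by rw [show s1 + (s2 - s1) = s2 by omega]⟩
      ⟨s1 + d, by omega, e1.symm, ?_⟩)
    rw [show s1 + d + (s2 - s1) = s2 + d by omega]
    exact e2.symm
  intro t1 ht1 t2 ht2 h1 h2
  simp only [Finset.mem_range] at ht1 ht2
  by_cases hk : k1 = k2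
  · subst hk
    have hd : d ≠ 0 := hne.resolve_left (fun h => h rfl)
    have e1 := hC1 k1 hk1 t1 (by omega) (t1 + d) (by omega) h1
    omega
  · rcases lt_trichotomy t1 t2 with hlt | heq | hlt
    · exact absurd (key t1 t2 ht1 ht2 hlt hk h1 h2) (fun h => h)
    · exact heq
    · exact absurd (key t2 t1 ht2 ht1 hlt hk h2 h1) (fun h => h)

lemma sum_ite_bound (s : Finset ℕ) (P : ℕ → Prop) [DecidablePred P] (N L : ℕ)
    (f : ℕ → ℤ)
    (huniq : ∀ t1 ∈ s, ∀ t2 ∈ s, P t1 → P t2 → t1 = t2) :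
    ‖∑ t ∈ s, (if P t then (N : ℂ) else 0) *
      Complex.exp (2 * (Real.pi : ℂ) * Complex.I * ((f t : ℤ) : ℂ) / (L : ℂ))‖ ≤ N := by
  have hcard : (s.filter P).card ≤ 1 := by
    refine Finset.card_le_one.mpr fun a ha b hb => ?_
    simp only [Finset.mem_filter] at ha hb
    exact huniq a ha.1 b hb.1 ha.2 hb.2
  simp only [ite_mul, zero_mul]
  rw [← Finset.sum_filter]
  calc ‖∑ t ∈ s.filter P, (N : ℂ) *
          Complex.exp (2 * (Real.pi : ℂ) * Complex.I * ((f t : ℤ) : ℂ) / (L : ℂ))‖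
      ≤ ∑ t ∈ s.filter P, ‖(N : ℂ) *
          Complex.exp (2 * (Real.pi : ℂ) * Complex.I * ((f t : ℤ) : ℂ) / (L : ℂ))‖ :=
        norm_sum_le _ _
    _ = ∑ _t ∈ s.filter P, (N : ℝ) := by
        refine Finset.sum_congr rfl fun t _ => ?_
        rw [norm_mul, absE, Complex.norm_natCast, mul_one]
    _ = (s.filter P).card * (N : ℝ) := by rw [Finset.sum_const, nsmul_eq_mul]
    _ ≤ 1 * (N : ℝ) := by
        apply mul_le_mul_of_nonneg_right _ (Nat.cast_nonneg N)
        exact_mod_cast hcard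
    _ = N := one_mul _

lemma geom_zero (L : ℕ) (hL : 0 < L) (ν : ℤ) (hν : ν ≠ 0) (hν2 : |ν| < (L : ℤ)) :
    ∑ t ∈ Finset.range L,
      Complex.exp (2 * (Real.pi : ℂ) * Complex.I * ((ν * t : ℤ) : ℂ) / (L : ℂ)) = 0 := by
  have hLC : (L : ℂ) ≠ 0 := Nat.cast_ne_zero.mpr hL.ne'
  have hpI : (2 * (Real.pi : ℂ) * Complex.I) ≠ 0 := by
    simp [Real.pi_ne_zero, Complex.I_ne_zero]
  set ζ := Complex.exp (2 * (Real.pi : ℂ) * Complex.I * (ν : ℂ) / (L : ℂ)) with hζ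
  have hterm : ∀ t : ℕ,
      Complex.exp (2 * (Real.pi : ℂ) * Complex.I * ((ν * t : ℤ) : ℂ) / (L : ℂ)) = ζ ^ t := by
    intro t
    rw [hζ, ← Complex.exp_nat_mul]
    congr 1
    push_cast
    ring
  simp only [hterm]
  have hζ1 : ζ ≠ 1 := by
    intro h
    rw [hζ, Complex.exp_eq_one_iff] at h
    obtain ⟨m, hm⟩ := h
    rw [div_eq_iff hLC] at hm
    have h4 : (2 * (Real.pi : ℂ) * Complex.I) * (ν : ℂ)
        = (2 * (Real.pi : ℂ) * Complex.I) * ((m : ℂ) * (L : ℂ)) := by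
      linear_combination hm
    have h5 : (ν : ℂ) = ((m * L : ℤ) : ℂ) := by
      push_cast
      exact mul_left_cancel₀ hpI h4
    have h6 : ν = m * L := by exact_mod_cast h5
    have hm0 : m ≠ 0 := by
      rintro rfl
      simp at h6
      exact hν h6
    have h7 : (L : ℤ) ≤ |ν| := by
      rw [h6, abs_mul, abs_of_nonneg (by positivity : (0 : ℤ) ≤ (L : ℤ))]
      nlinarith [Int.one_le_abs hm0, Int.natCast_pos.mpr hL]
    omega
  rw [geom_sum_eq hζ1]
  have hζL : ζ ^ L = 1 := by
    rw [hζ, ← Complex.exp_nat_mul]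
    have he : (L : ℂ) * (2 * (Real.pi : ℂ) * Complex.I * (ν : ℂ) / (L : ℂ))
        = (ν : ℂ) * (2 * (Real.pi : ℂ) * Complex.I) := by
      field_simp
    rw [he, Complex.exp_int_mul_two_pi_mul_I]
  rw [hζL]
  simp
/-- Corollary, case V: with `K = min{p^n, p1^n1}`,
`L = (p^n - 1)(p1^n1 + 1 - c)` and `N = p^n (p1^n1 + 1)` (`p`, `p1` primes,
`1 ≤ c < p1^n1`), the set of Construction 2 is an aperiodic
`(K, p^n (p1^n1 + 1), (p^n - 1)(p1^n1 + 1 - c), p^n (p1^n1 + 1), Π)`-DRCS set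
with `Π = (-L,L) × (-L,L)`: all relevant AF magnitudes are at most
`p^n (p1^n1 + 1)`. -/
theorem stmt16 (p p1 n n1 c r K L N : ℕ)
    (hp : p.Prime) (hp1 : p1.Prime) (hn : 0 < n) (hn1 : 0 < n1)
    (hc1 : 1 ≤ c) (hc2 : c < p1 ^ n1)
    (hK : K = min (p ^ n) (p1 ^ n1))
    (hL : L = (p ^ n - 1) * (p1 ^ n1 + 1 - c))
    (hN : N = p ^ n * (p1 ^ n1 + 1))
    (A : ℕ → ℕ → ZMod N) (hA : IsGQFR N K L A)
    (b : ℕ → ℕ → ℤ) (hB : IsBH N r b) :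
    (∀ k < K, ∀ τ ν : ℤ, |τ| < (L : ℤ) → |ν| < (L : ℤ) → (τ, ν) ≠ (0, 0) →
        ‖AFsum L N r A b k k τ ν‖ ≤ p ^ n * (p1 ^ n1 + 1)) ∧
      (∀ k1 < K, ∀ k2 < K, k1 ≠ k2 → ∀ τ ν : ℤ, |τ| < (L : ℤ) → |ν| < (L : ℤ) →
        ‖AFsum L N r A b k1 k2 τ ν‖ ≤ p ^ n * (p1 ^ n1 + 1)) := by
  have hp2 : 2 ≤ p ^ n := (Nat.one_lt_pow hn.ne' hp.one_lt)
  have hNpos : 0 < N := by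
    rw [hN]; positivity
  haveI : NeZero N := ⟨hNpos.ne'⟩
  have hLpos : 0 < L := by
    rw [hL]; exact Nat.mul_pos (by omega) (by omega)
  have hNR : ((p : ℝ)) ^ n * ((p1 : ℝ) ^ n1 + 1) = (N : ℝ) := by
    rw [hN]; push_cast; ring
  constructor
  · intro k hk τ ν hτ hν hne0
    rw [hNR, AFsum_eq L N r A b hB k k τ ν]
    by_cases h : 0 ≤ τ
    · rw [if_pos h]
      by_cases hτz : τ = 0
      · subst hτz
        have hνz : ν ≠ 0 := by
          intro h'; exact hne0 (by rw [h'])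
        simp only [Int.toNat_zero, add_zero, Nat.sub_zero, eq_self_iff_true, if_true]
        rw [← Finset.mul_sum]
        rw [geom_zero L hLpos ν hνz hν]
        simp
      · exact sum_ite_bound _ _ N L (fun t => ν * t)
          (gqfr_uniq hA hk hk τ.toNat (Or.inr (by omega)))
    · rw [if_neg h]
      refine sum_ite_bound _ _ N L (fun t => ν * (t + (-τ).toNat)) ?_
      intro t1 ht1 t2 ht2 h1 h2
      exact gqfr_uniq hA hk hk (-τ).toNat (Or.inr (by omega)) t1 ht1 t2 ht2 h1.symm h2.symm
  · intro k1 hk1 k2 hk2 hkk τ ν hτ hν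
    rw [hNR, AFsum_eq L N r A b hB k1 k2 τ ν]
    by_cases h : 0 ≤ τ
    · rw [if_pos h]
      exact sum_ite_bound _ _ N L (fun t => ν * t)
        (gqfr_uniq hA hk1 hk2 τ.toNat (Or.inl hkk))
    · rw [if_neg h]
      refine sum_ite_bound _ _ N L (fun t => ν * (t + (-τ).toNat)) ?_
      intro t1 ht1 t2 ht2 h1 h2
      exact gqfr_uniq hA hk2 hk1 (-τ).toNat (Or.inl hkk.symm) t1 ht1 t2 ht2 h1.symm h2.symm
end
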